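/- arXiv:2107.08179 — 5 statements merged into one kernel-verified Lean document; each statement's English description precedes it below -/
import Mathlib

section
/- In the setting of the three-stage kernel model: μ a probability measure on X, κ a Markov kernel from X to Y, ν a Markov kernel from X × Y to Z, f : Z → ℝ bounded measurable, F(x, y) := ∫_Z f dν(x, y), F̄(x, y) := F(x, y) − ∫_Y F(x, y′) κ(x)(dy′), and η > 0: suppose there exists a measurable function c₊ : X → (0, ∞) such that for every x the exponentially tilted kernel κ₊(x), defined as the probability measure with density y ↦ exp(c₊(x)·F(x, y)) / ∫_Y exp(c₊(x)·F(x, y′)) κ(x)(dy′) with respect to κ(x), satisfies kl(κ₊(x)‖κ(x)) = η. Then κ₊ satisfies the constraint kl(κ₊(x)‖κ(x)) ≤ η for all x and attains the upper bound: ∫ f(z) d((μ ⊗ κ₊) ⊗ ν) − ∫ f(z) d((μ ⊗ κ) ⊗ ν) = ∫_X inf_{c>0} [ (1/c)·log ∫_Y exp(c·F̄(x, y)) κ(x)(dy) + η/c ] μ(dx). Consequently the supremum over all Markov kernels κ′ with kl(κ′(x)‖κ(x)) ≤ η for all x of the bias equals the right-hand side. -/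
open MeasureTheory ProbabilityTheory Real Filter Set
open scoped Classical ProbabilityTheory

/-- The Kullback–Leibler divergence `kl(Q‖P)`: equal to `∫ log (dQ/dP) dQ` when `Q ≪ P`
and the log-likelihood ratio is `Q`-integrable, and `+∞` otherwise. -/
noncomputable def klDiv {Ω : Type*} [MeasurableSpace Ω] (Q P : Measure Ω) : EReal :=
  if Q ≪ P ∧ Integrable (llr Q P) Q then ((∫ ω, llr Q P ω ∂Q : ℝ) : EReal) else ⊤

/-- The expression `(1/c) log E_P[exp(c·g)] + η/c`, interpreted as `+∞` at those `c`
where the exponential moment is infinite. -/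
noncomputable def uqObj {Ω : Type*} [MeasurableSpace Ω] (P : Measure Ω) (g : Ω → ℝ)
    (η c : ℝ) : EReal :=
  if Integrable (fun ω => Real.exp (c * g ω)) P then
    (((1 / c) * Real.log (∫ ω, Real.exp (c * g ω) ∂P) + η / c : ℝ) : EReal)
  else ⊤

section MyAux
variable {Ω : Type*} [MeasurableSpace Ω]

lemma my_integrable_of_abs_le (P : Measure Ω) [IsFiniteMeasure P] {h : Ω → ℝ}
    (hm : AEStronglyMeasurable h P) {B : ℝ} (hb : ∀ ω, |h ω| ≤ B) : Integrable h P :=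
  ⟨hm, HasFiniteIntegral.of_bounded (C := B) (ae_of_all _ hb)⟩

lemma my_abs_integral_le (P : Measure Ω) [IsProbabilityMeasure P] {h : Ω → ℝ} {B : ℝ}
    (hb : ∀ ω, |h ω| ≤ B) : |∫ ω, h ω ∂P| ≤ B := by
  have := norm_integral_le_of_norm_le_const (μ := P) (f := h) (C := B)
    (ae_of_all _ fun ω => (Real.norm_eq_abs _).trans_le (hb ω))
  simpa [Real.norm_eq_abs] using this

lemma my_integral_llr_nonneg (Q P : Measure Ω) [IsProbabilityMeasure Q] [IsProbabilityMeasure P]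
    (hQP : Q ≪ P) (hint : Integrable (llr Q P) Q) : 0 ≤ ∫ ω, llr Q P ω ∂Q := by
  have hexp : (fun ω => Real.exp (- llr Q P ω)) =ᵐ[Q] fun ω => (P.rnDeriv Q ω).toReal :=
    exp_neg_llr hQP
  have hint2 : Integrable (fun ω => Real.exp (- llr Q P ω)) Q :=
    Measure.integrable_toReal_rnDeriv.congr hexp.symm
  have h1 : ∫ ω, Real.exp (- llr Q P ω) ∂Q ≤ 1 := by
    rw [integral_congr_ae hexp]
    calc ∫ ω, (P.rnDeriv Q ω).toReal ∂Q
        = ∫ ω in Set.univ, (P.rnDeriv Q ω).toReal ∂Q := setIntegral_univ.symm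
      _ ≤ (P Set.univ).toReal := Measure.setIntegral_toReal_rnDeriv_le (measure_ne_top P _)
      _ = 1 := by simp
  have h2 : ∫ ω, (- llr Q P ω + 1) ∂Q ≤ ∫ ω, Real.exp (- llr Q P ω) ∂Q :=
    integral_mono (hint.neg.add (integrable_const 1)) hint2
      (fun ω => Real.add_one_le_exp _)
  have hnegint : Integrable (fun ω => - llr Q P ω) Q := hint.neg
  have h3 : ∫ ω, (- llr Q P ω + 1) ∂Q = - ∫ ω, llr Q P ω ∂Q + 1 := by
    rw [integral_add hnegint (integrable_const 1)]
    simp [integral_neg]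
  rw [h3] at h2
  linarith

lemma my_gibbs (Q P : Measure Ω) [IsProbabilityMeasure Q] [IsProbabilityMeasure P]
    (hQP : Q ≪ P) (hint : Integrable (llr Q P) Q)
    {h : Ω → ℝ} (hm : StronglyMeasurable h) {B : ℝ} (hb : ∀ ω, |h ω| ≤ B) :
    ∫ ω, h ω ∂Q ≤ Real.log (∫ ω, Real.exp (h ω) ∂P) + ∫ ω, llr Q P ω ∂Q := by
  have hexpP : Integrable (fun ω => Real.exp (h ω)) P := by
    refine my_integrable_of_abs_le P
      (Real.continuous_exp.comp_stronglyMeasurable hm).aestronglyMeasurable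
      (B := Real.exp B) (fun ω => ?_)
    rw [abs_of_pos (Real.exp_pos _)]
    exact Real.exp_le_exp.mpr ((le_abs_self _).trans (hb ω))
  have hQh : Integrable h Q := my_integrable_of_abs_le Q hm.aestronglyMeasurable hb
  haveI : IsProbabilityMeasure (P.tilted h) := isProbabilityMeasure_tilted hexpP
  have hQP' : Q ≪ P.tilted h := hQP.trans (absolutelyContinuous_tilted hexpP)
  have hintQ' : Integrable (llr Q (P.tilted h)) Q :=
    integrable_llr_tilted_right hQP hQh hint hexpP
  have hval : ∫ ω, llr Q (P.tilted h) ω ∂Q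
      = ∫ ω, llr Q P ω ∂Q - ∫ ω, h ω ∂Q + Real.log (∫ ω, Real.exp (h ω) ∂P) :=
    integral_llr_tilted_right hQP hQh hexpP hint
  have hnn := my_integral_llr_nonneg Q (P.tilted h) hQP' hintQ'
  rw [hval] at hnn
  linarith

end MyAux

/-- **Theorem 3.2, tightness (kernel form)**: if for every `x` the `x`-dependent
exponential tilt `κ₊(x)` of `κ(x)` by `c₊(x) F(x,·)` satisfies `kl(κ₊(x)‖κ(x)) = η`,
then `κ₊` satisfies the KL constraint and attains the model sensitivity upper bound, so
the supremum of the bias over all Markov kernels `κ′` with `kl(κ′(x)‖κ(x)) ≤ η` for all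
`x` equals `∫_X inf_{c>0}[(1/c) log ∫ exp(c F̄(x,y)) κ(x)(dy) + η/c] μ(dx)`. -/

theorem model_sensitivity_tightness
    {X Y Z : Type*} [MeasurableSpace X] [MeasurableSpace Y] [MeasurableSpace Z]
    (μ : Measure X) [IsProbabilityMeasure μ]
    (κ : Kernel X Y) [IsMarkovKernel κ]
    (ν : Kernel (X × Y) Z) [IsMarkovKernel ν]
    (f : Z → ℝ) (hf : Measurable f) (C : ℝ) (hfb : ∀ z, |f z| ≤ C)
    (F Fbar : X → Y → ℝ)
    (hF : F = fun x y => ∫ z, f z ∂(ν (x, y)))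
    (hFbar : Fbar = fun x y => F x y - ∫ y', F x y' ∂(κ x))
    (η : ℝ) (hη : 0 < η)
    (g : X → ℝ)
    (hg : ∀ x, (g x : EReal) = ⨅ c ∈ Set.Ioi (0 : ℝ), uqObj (κ x) (Fbar x) η c)
    (hgint : Integrable g μ)
    (cplus : X → ℝ) (hcmeas : Measurable cplus) (hcpos : ∀ x, 0 < cplus x)
    (κplus : Kernel X Y) [IsMarkovKernel κplus]
    (hκplus : ∀ x, κplus x = (κ x).withDensity (fun y =>
      ENNReal.ofReal (Real.exp (cplus x * F x y)
        / ∫ y', Real.exp (cplus x * F x y') ∂(κ x))))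
    (hkl : ∀ x, klDiv (κplus x) (κ x) = ((η : ℝ) : EReal)) :
    (∀ x, klDiv (κplus x) (κ x) ≤ ((η : ℝ) : EReal)) ∧
    (∫ p, f p.2 ∂((μ ⊗ₘ κplus) ⊗ₘ ν) - ∫ p, f p.2 ∂((μ ⊗ₘ κ) ⊗ₘ ν)
      = ∫ x, g x ∂μ) ∧
    IsGreatest {r : ℝ | ∃ κ' : Kernel X Y, IsMarkovKernel κ' ∧
        (∀ x, klDiv (κ' x) (κ x) ≤ ((η : ℝ) : EReal)) ∧
        r = ∫ p, f p.2 ∂((μ ⊗ₘ κ') ⊗ₘ ν) - ∫ p, f p.2 ∂((μ ⊗ₘ κ) ⊗ₘ ν)}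
      (∫ x, g x ∂μ) := by
  -- measurability and boundedness of F
  have hFm : StronglyMeasurable (Function.uncurry F) := by
    rw [hF]
    exact (hf.stronglyMeasurable.comp_measurable measurable_snd).integral_kernel_prod_right'
      (κ := ν)
  have hFb : ∀ x y, |F x y| ≤ C := by
    intro x y
    rw [hF]
    exact my_abs_integral_le _ hfb
  set m : X → ℝ := fun x => ∫ y', F x y' ∂(κ x) with hm
  have hmm : StronglyMeasurable m := hFm.integral_kernel_prod_right (κ := κ)
  have hmb : ∀ x, |m x| ≤ C := fun x => my_abs_integral_le _ (fun y => hFb x y)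
  have hFbarm : StronglyMeasurable (Function.uncurry Fbar) := by
    rw [hFbar]
    exact hFm.sub (hmm.comp_measurable measurable_fst)
  have hFxm : ∀ x, StronglyMeasurable (F x) :=
    fun x => hFm.comp_measurable measurable_prodMk_left
  have hFbarxm : ∀ x, StronglyMeasurable (Fbar x) :=
    fun x => hFbarm.comp_measurable measurable_prodMk_left
  have hFbarb : ∀ x y, |Fbar x y| ≤ C + C := by
    intro x y
    rw [hFbar]
    exact (abs_sub _ _).trans (add_le_add (hFb x y) (hmb x))
  have hexpint : ∀ (x : X) (c : ℝ), Integrable (fun y => Real.exp (c * Fbar x y)) (κ x) := by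
    intro x c
    refine my_integrable_of_abs_le _
      (Real.continuous_exp.comp_stronglyMeasurable
        ((hFbarxm x).const_mul c)).aestronglyMeasurable
      (B := Real.exp (|c| * (C + C))) (fun y => ?_)
    rw [abs_of_pos (Real.exp_pos _)]
    refine Real.exp_le_exp.mpr ((le_abs_self _).trans ?_)
    rw [abs_mul]
    exact mul_le_mul_of_nonneg_left (hFbarb x y) (abs_nonneg c)
  have huq : ∀ (x : X) (c : ℝ), uqObj (κ x) (Fbar x) η c
      = (((1 / c) * Real.log (∫ y, Real.exp (c * Fbar x y) ∂(κ x)) + η / c : ℝ) : EReal) := by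
    intro x c
    unfold uqObj
    rw [if_pos (hexpint x c)]
  -- pointwise upper bound from the Gibbs/Donsker–Varadhan inequality
  have key_le : ∀ (Q : Measure Y), IsProbabilityMeasure Q → ∀ x : X,
      klDiv Q (κ x) ≤ ((η : ℝ) : EReal) → ∫ y, Fbar x y ∂Q ≤ g x := by
    intro Q hQ x hle
    haveI := hQ
    by_cases hcond : Q ≪ κ x ∧ Integrable (llr Q (κ x)) Q
    swap
    · unfold klDiv at hle
      rw [if_neg hcond] at hle
      exact absurd hle (not_le.mpr (EReal.coe_lt_top η))
    obtain ⟨hac, hint⟩ := hcond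
    have hklle : ∫ y, llr Q (κ x) y ∂Q ≤ η := by
      unfold klDiv at hle
      rw [if_pos ⟨hac, hint⟩] at hle
      exact_mod_cast hle
    have hE : ((∫ y, Fbar x y ∂Q : ℝ) : EReal) ≤ (g x : EReal) := by
      rw [hg x]
      refine le_iInf₂ (fun c hc => ?_)
      rw [huq x c]
      have hc' : (0 : ℝ) < c := hc
      rw [EReal.coe_le_coe_iff]
      have hg1 := my_gibbs Q (κ x) hac hint ((hFbarxm x).const_mul c)
        (B := |c| * (C + C)) (fun y => by
          rw [abs_mul]
          exact mul_le_mul_of_nonneg_left (hFbarb x y) (abs_nonneg c))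
      rw [integral_const_mul] at hg1
      have hT : 1 / c * Real.log (∫ y, Real.exp (c * Fbar x y) ∂(κ x)) + η / c
          = (Real.log (∫ y, Real.exp (c * Fbar x y) ∂(κ x)) + η) / c := by ring
      rw [hT, le_div_iff₀ hc', mul_comm]
      linarith
    exact_mod_cast hE
  -- the tilted kernel attains the infimum pointwise
  have heq : ∀ x, ∫ y, Fbar x y ∂(κplus x) = g x := by
    intro x
    have hc : (0 : ℝ) < cplus x := hcpos x
    have hexpF : Integrable (fun y => Real.exp (cplus x * F x y)) (κ x) := by
      refine my_integrable_of_abs_le _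
        (Real.continuous_exp.comp_stronglyMeasurable
          ((hFxm x).const_mul (cplus x))).aestronglyMeasurable
        (B := Real.exp (|cplus x| * C)) (fun y => ?_)
      rw [abs_of_pos (Real.exp_pos _)]
      refine Real.exp_le_exp.mpr ((le_abs_self _).trans ?_)
      rw [abs_mul]
      exact mul_le_mul_of_nonneg_left (hFb x y) (abs_nonneg _)
    have htilt : κplus x = (κ x).tilted (fun y => cplus x * F x y) := by
      rw [hκplus x]; rfl
    have hac : κplus x ≪ κ x := by
      rw [htilt]; exact tilted_absolutelyContinuous _ _
    set Zx := ∫ y, Real.exp (cplus x * F x y) ∂(κ x) with hZdef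
    have hZpos : 0 < Zx := integral_exp_pos hexpF
    have hllr_ae : llr (κplus x) (κ x) =ᵐ[κplus x]
        fun y => cplus x * F x y - Real.log Zx := by
      have h1 : llr ((κ x).tilted fun y => cplus x * F x y) (κ x)
          =ᵐ[κ x] fun y => cplus x * F x y - Real.log Zx :=
        log_rnDeriv_tilted_left_self hexpF
      rw [htilt]
      exact h1.filter_mono (tilted_absolutelyContinuous _ _).ae_le
    have hbd : ∀ y, |cplus x * F x y - Real.log Zx| ≤ |cplus x| * C + |Real.log Zx| := by
      intro y
      refine (abs_sub _ _).trans (add_le_add ?_ le_rfl)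
      rw [abs_mul]
      exact mul_le_mul_of_nonneg_left (hFb x y) (abs_nonneg _)
    have hllr_int : Integrable (llr (κplus x) (κ x)) (κplus x) := by
      refine (my_integrable_of_abs_le (κplus x)
        (((hFxm x).const_mul (cplus x)).sub stronglyMeasurable_const).aestronglyMeasurable
        hbd).congr hllr_ae.symm
    have hFint : Integrable (fun y => F x y) (κplus x) :=
      my_integrable_of_abs_le _ (hFxm x).aestronglyMeasurable (fun y => hFb x y)
    have hklv : ∫ y, llr (κplus x) (κ x) y ∂(κplus x) = η := by
      have h := hkl x
      unfold klDiv at h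
      rw [if_pos ⟨hac, hllr_int⟩] at h
      exact_mod_cast h
    have hIF : ∫ y, llr (κplus x) (κ x) y ∂(κplus x)
        = cplus x * (∫ y, F x y ∂(κplus x)) - Real.log Zx := by
      rw [integral_congr_ae hllr_ae, integral_sub (hFint.const_mul _) (integrable_const _),
        integral_const, integral_const_mul]
      simp
    have hη' : η = cplus x * (∫ y, F x y ∂(κplus x)) - Real.log Zx := by
      rw [← hklv, hIF]
    have hφ : ∫ y, Fbar x y ∂(κplus x) = (∫ y, F x y ∂(κplus x)) - m x := by
      rw [hFbar]
      rw [integral_sub hFint (integrable_const _), integral_const]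
      simp [hm]
    have hZbar : ∫ y, Real.exp (cplus x * Fbar x y) ∂(κ x)
        = Zx * Real.exp (-(cplus x * m x)) := by
      have hcongr : ∀ y, Real.exp (cplus x * Fbar x y)
          = Real.exp (cplus x * F x y) * Real.exp (-(cplus x * m x)) := by
        intro y
        rw [← Real.exp_add, hFbar]
        ring_nf
        rfl
      rw [integral_congr_ae (ae_of_all _ hcongr), integral_mul_const]
    have huqval : uqObj (κ x) (Fbar x) η (cplus x)
        = (((∫ y, F x y ∂(κplus x)) - m x : ℝ) : EReal) := by
      rw [huq x (cplus x)]
      norm_cast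
      rw [hZbar, Real.log_mul hZpos.ne' (Real.exp_pos _).ne', Real.log_exp, hη']
      field_simp
      ring
    have hge : g x ≤ (∫ y, F x y ∂(κplus x)) - m x := by
      have : (g x : EReal) ≤ (((∫ y, F x y ∂(κplus x)) - m x : ℝ) : EReal) := by
        rw [hg x, ← huqval]
        exact iInf₂_le (cplus x) (Set.mem_Ioi.mpr hc)
      exact_mod_cast this
    have hle := key_le (κplus x) inferInstance x (le_of_eq (hkl x))
    rw [hφ] at hle ⊢
    exact le_antisymm hle hge
  -- the bias formula
  have hIb : ∀ (κ' : Kernel X Y), IsMarkovKernel κ' → ∀ x, |∫ y, F x y ∂(κ' x)| ≤ C := by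
    intro κ' hk x
    haveI := hk
    exact my_abs_integral_le _ (fun y => hFb x y)
  have hbias : ∀ (κ' : Kernel X Y), IsMarkovKernel κ' →
      ∫ p, f p.2 ∂((μ ⊗ₘ κ') ⊗ₘ ν) = ∫ x, ∫ y, F x y ∂(κ' x) ∂μ := by
    intro κ' hk
    haveI := hk
    have h1 : Integrable (fun p : (X × Y) × Z => f p.2) ((μ ⊗ₘ κ') ⊗ₘ ν) :=
      my_integrable_of_abs_le _ ((hf.comp measurable_snd).aestronglyMeasurable)
        (fun p => hfb _)
    have h3 : Integrable (fun q : X × Y => F q.1 q.2) (μ ⊗ₘ κ') :=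
      my_integrable_of_abs_le _ hFm.aestronglyMeasurable (fun q => hFb _ _)
    calc ∫ p, f p.2 ∂((μ ⊗ₘ κ') ⊗ₘ ν)
        = ∫ q, (∫ z, f z ∂(ν q)) ∂(μ ⊗ₘ κ') := Measure.integral_compProd h1
      _ = ∫ q : X × Y, F q.1 q.2 ∂(μ ⊗ₘ κ') := by
          refine integral_congr_ae (ae_of_all _ fun q => ?_)
          rw [hF]
      _ = ∫ x, ∫ y, F x y ∂(κ' x) ∂μ := Measure.integral_compProd h3
  have hdiff : ∀ (κ' : Kernel X Y), IsMarkovKernel κ' →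
      ∫ p, f p.2 ∂((μ ⊗ₘ κ') ⊗ₘ ν) - ∫ p, f p.2 ∂((μ ⊗ₘ κ) ⊗ₘ ν)
        = ∫ x, ∫ y, Fbar x y ∂(κ' x) ∂μ := by
    intro κ' hk
    haveI := hk
    rw [hbias κ' hk, hbias κ inferInstance]
    have hint1 : Integrable (fun x => ∫ y, F x y ∂(κ' x)) μ :=
      my_integrable_of_abs_le _ (hFm.integral_kernel_prod_right (κ := κ')).aestronglyMeasurable
        (hIb κ' hk)
    have hint2 : Integrable m μ := my_integrable_of_abs_le _ hmm.aestronglyMeasurable hmb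
    rw [← integral_sub hint1 hint2]
    refine integral_congr_ae (ae_of_all _ fun x => ?_)
    have hFint : Integrable (fun y => F x y) (κ' x) :=
      my_integrable_of_abs_le _ (hFxm x).aestronglyMeasurable (fun y => hFb x y)
    simp only [hFbar]
    rw [integral_sub hFint (integrable_const _), integral_const]
    simp [hm]
  have main2 : ∫ p, f p.2 ∂((μ ⊗ₘ κplus) ⊗ₘ ν) - ∫ p, f p.2 ∂((μ ⊗ₘ κ) ⊗ₘ ν)
      = ∫ x, g x ∂μ := by
    rw [hdiff κplus inferInstance]
    exact integral_congr_ae (ae_of_all _ fun x => heq x)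
  refine ⟨fun x => le_of_eq (hkl x), main2, ⟨⟨κplus, inferInstance,
    fun x => le_of_eq (hkl x), main2.symm⟩, ?_⟩⟩
  rintro r ⟨κ', hk, hcon, rfl⟩
  haveI := hk
  rw [hdiff κ' hk]
  refine integral_mono ?_ hgint (fun x => key_le (κ' x) inferInstance x (hcon x))
  exact my_integrable_of_abs_le _
    (hFbarm.integral_kernel_prod_right (κ := κ')).aestronglyMeasurable
    (fun x => my_abs_integral_le _ (fun y => hFbarb x y))
end

section
/- Let W, V, Y, Z be measurable spaces, μ a probability measure on W × V, κ₀ a Markov kernel from V to Y, and ν₀ a Markov kernel from V × Y to Z; define the intermediate kernel κ on W × V by κ(w, v) := κ₀(v) and the final kernel ν on (W × V) × Y by ν((w, v), y) := ν₀(v, y) (this encodes the conditional independence X_k ⊥ X_{ρ_l∖π_l} | X_{π_l}). Let f : Z → ℝ be bounded measurable, F₀(v, y) := ∫_Z f dν₀(v, y), and η > 0. Assume there exists a measurable c₊ : V → (0, ∞) such that for every v the tilted kernel κ₊(v), with density y ↦ exp(c₊(v)·F₀(v, y)) / ∫ exp(c₊(v)·F₀(v, y′)) κ₀(v)(dy′)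 with respect to κ₀(v), satisfies kl(κ₊(v)‖κ₀(v)) = η. Then the supremum of the bias ∫ f d((μ ⊗ κ′) ⊗ ν) − ∫ f d((μ ⊗ κ) ⊗ ν) over all Markov kernels κ′ from W × V to Y with kl(κ′(w, v)‖κ₀(v)) ≤ η for all (w, v) equals the supremum over the smaller class of kernels of the restricted form κ′(w, v) = λ(v) for a Markov kernel λ from V to Y with kl(λ(v)‖κ₀(v)) ≤ η for all v, and both suprema are attained at (w, v) ↦ κ₊(v). -/
open MeasureTheory ProbabilityTheory Real Filter Set
open scoped Classical ProbabilityTheory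

section Aux
variable {α : Type*} [MeasurableSpace α]

lemma aux_integrable_of_bound (m : Measure α) [IsFiniteMeasure m]
    {g : α → ℝ} (hg : AEStronglyMeasurable g m) (C : ℝ) (hgb : ∀ x, |g x| ≤ C) :
    Integrable g m :=
  (integrable_const C).mono' hg (ae_of_all _ fun x => by
    rw [Real.norm_eq_abs]; exact hgb x)

lemma aux_abs_integral_le (m : Measure α) [IsProbabilityMeasure m]
    {g : α → ℝ} (C : ℝ) (hgb : ∀ x, |g x| ≤ C) : |∫ x, g x ∂m| ≤ C := by
  have := norm_integral_le_of_norm_le_const (μ := m) (f := g) (C := C)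
    (ae_of_all _ fun x => by rw [Real.norm_eq_abs]; exact hgb x)
  simpa using this

lemma aux_kl_nonneg (Q P : Measure α) [IsProbabilityMeasure Q] [IsProbabilityMeasure P]
    (hQP : Q ≪ P) (hint : Integrable (llr Q P) Q) : 0 ≤ ∫ x, llr Q P x ∂Q := by
  have h1 : ∀ᵐ x ∂Q, -(llr Q P x) ≤ (P.rnDeriv Q x).toReal - 1 := by
    filter_upwards [MeasureTheory.neg_llr hQP, Measure.rnDeriv_pos' hQP,
      Measure.rnDeriv_lt_top P Q] with x hneg hpos hlt
    have ht : 0 < (P.rnDeriv Q x).toReal := ENNReal.toReal_pos hpos.ne' hlt.ne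
    calc -(llr Q P x) = llr P Q x := hneg
      _ ≤ (P.rnDeriv Q x).toReal - 1 := Real.log_le_sub_one_of_pos ht
  have h2 : ∫ x, -(llr Q P x) ∂Q ≤ ∫ x, ((P.rnDeriv Q x).toReal - 1) ∂Q :=
    integral_mono_ae hint.neg (Measure.integrable_toReal_rnDeriv.sub (integrable_const 1)) h1
  rw [integral_neg] at h2
  have h3 : ∫ x, ((P.rnDeriv Q x).toReal - 1) ∂Q ≤ 0 := by
    rw [integral_sub Measure.integrable_toReal_rnDeriv (integrable_const 1)]
    simp only [integral_const, measure_univ, probReal_univ, ENNReal.toReal_one, smul_eq_mul, one_mul]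
    have h4 : ∫ x, (P.rnDeriv Q x).toReal ∂Q ≤ (P Set.univ).toReal := by
      rw [← setIntegral_univ]
      exact Measure.setIntegral_toReal_rnDeriv_le (measure_ne_top P _)
    simp only [measure_univ, ENNReal.toReal_one] at h4
    linarith
  linarith

lemma aux_gibbs_le (P Q : Measure α) [IsProbabilityMeasure P] [IsProbabilityMeasure Q]
    (g : α → ℝ) (hg : Measurable g) (B : ℝ) (hgb : ∀ x, |g x| ≤ B)
    (hQP : Q ≪ P) (hint : Integrable (llr Q P) Q) :
    ∫ x, g x ∂Q - log (∫ x, exp (g x) ∂P) ≤ ∫ x, llr Q P x ∂Q := by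
  have hexpP : Integrable (fun x => exp (g x)) P :=
    aux_integrable_of_bound P hg.exp.aestronglyMeasurable (exp B) fun x => by
      rw [abs_of_pos (exp_pos _)]
      exact exp_le_exp.2 (le_of_abs_le (hgb x))
  have hgQ : Integrable g Q := aux_integrable_of_bound Q hg.aestronglyMeasurable B hgb
  haveI : NeZero P := ⟨IsProbabilityMeasure.ne_zero P⟩
  haveI : IsProbabilityMeasure (P.tilted g) := isProbabilityMeasure_tilted hexpP
  have hQt : Q ≪ P.tilted g := hQP.trans (absolutelyContinuous_tilted hexpP)
  have hIntllrT : Integrable (llr Q (P.tilted g)) Q :=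
    integrable_llr_tilted_right hQP hgQ hint hexpP
  have h0 : 0 ≤ ∫ x, llr Q (P.tilted g) x ∂Q := aux_kl_nonneg Q (P.tilted g) hQt hIntllrT
  have heq := integral_llr_tilted_right hQP hgQ hexpP hint
  linarith [heq ▸ h0]

lemma aux_kl_tilted_eq (P : Measure α) [IsProbabilityMeasure P]
    (g : α → ℝ) (hg : Measurable g) (B : ℝ) (hgb : ∀ x, |g x| ≤ B) :
    klDiv (P.tilted g) P
      = ((∫ x, g x ∂(P.tilted g) - log (∫ x, exp (g x) ∂P) : ℝ) : EReal) := by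
  have hexpP : Integrable (fun x => exp (g x)) P :=
    aux_integrable_of_bound P hg.exp.aestronglyMeasurable (exp B) fun x => by
      rw [abs_of_pos (exp_pos _)]
      exact exp_le_exp.2 (le_of_abs_le (hgb x))
  haveI : NeZero P := ⟨IsProbabilityMeasure.ne_zero P⟩
  haveI : IsProbabilityMeasure (P.tilted g) := isProbabilityMeasure_tilted hexpP
  have hself : llr P P =ᵐ[P] fun _ => 0 := by
    filter_upwards [Measure.rnDeriv_self P] with x hx
    simp [llr, hx]
  have h_aeP : llr (P.tilted g) P =ᵐ[P] fun x => g x - log (∫ x, exp (g x) ∂P) := by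
    filter_upwards [llr_tilted_left Measure.AbsolutelyContinuous.rfl hexpP hg.aemeasurable,
      hself] with x hx h0
    rw [hx, h0]; simp
  have h_ae : llr (P.tilted g) P =ᵐ[P.tilted g] fun x => g x - log (∫ x, exp (g x) ∂P) :=
    (tilted_absolutelyContinuous P g).ae_le h_aeP
  have hgT : Integrable g (P.tilted g) :=
    aux_integrable_of_bound _ hg.aestronglyMeasurable B hgb
  have hIntT : Integrable (llr (P.tilted g) P) (P.tilted g) :=
    (Integrable.congr (hgT.sub (integrable_const _)) h_ae.symm)
  rw [klDiv, if_pos ⟨tilted_absolutelyContinuous P g, hIntT⟩]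
  congr 1
  rw [integral_congr_ae h_ae, integral_sub hgT (integrable_const _)]
  simp

lemma aux_key (P Q : Measure α) [IsProbabilityMeasure P] [IsProbabilityMeasure Q]
    (F : α → ℝ) (hF : Measurable F) (C : ℝ) (hFb : ∀ x, |F x| ≤ C)
    (c : ℝ) (hc : 0 < c) (η : ℝ)
    (hklT : klDiv (P.tilted (fun x => c * F x)) P = ((η : ℝ) : EReal))
    (hQ : klDiv Q P ≤ ((η : ℝ) : EReal)) :
    ∫ x, F x ∂Q ≤ ∫ x, F x ∂(P.tilted (fun x => c * F x)) := by
  set g : α → ℝ := fun x => c * F x with hgdef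
  have hgm : Measurable g := (measurable_const.mul hF)
  have hgb : ∀ x, |g x| ≤ c * C := fun x => by
    rw [hgdef]; simp only [abs_mul, abs_of_pos hc]
    exact mul_le_mul_of_nonneg_left (hFb x) hc.le
  by_cases hcond : Q ≪ P ∧ Integrable (llr Q P) Q
  · rw [klDiv, if_pos hcond] at hQ
    have hQ' : ∫ x, llr Q P x ∂Q ≤ η := EReal.coe_le_coe_iff.mp hQ
    have hT := aux_kl_tilted_eq P g hgm (c * C) hgb
    rw [hklT] at hT
    have hT' : ∫ x, g x ∂(P.tilted g) - log (∫ x, exp (g x) ∂P) = η :=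
      (EReal.coe_eq_coe_iff.mp hT.symm)
    have hgibbs := aux_gibbs_le P Q g hgm (c * C) hgb hcond.1 hcond.2
    have h1 : ∫ x, g x ∂Q ≤ ∫ x, g x ∂(P.tilted g) := by linarith
    rw [hgdef] at h1
    simp only [integral_const_mul] at h1
    exact le_of_mul_le_mul_left h1 hc
  · rw [klDiv, if_neg hcond] at hQ
    exact absurd (top_le_iff.mp hQ) (EReal.coe_ne_top η)

end Aux

/-- **Theorem 3.3(b) (kernel form)**: under the conditional independence encoded by
`κ(w,v) = κ₀(v)` and `ν((w,v),y) = ν₀(v,y)`, the supremum of the bias over all Markov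
kernels `κ′` from `W × V` to `Y` with `kl(κ′(w,v)‖κ₀(v)) ≤ η` equals the supremum over
the smaller class of kernels of the restricted form `κ′(w,v) = λ(v)`, and both suprema
are attained at the lift `(w,v) ↦ κ₊(v)` of the tilted kernel `κ₊`. -/
theorem model_sensitivity_fixed_parents
    {W V Y Z : Type*} [MeasurableSpace W] [MeasurableSpace V] [MeasurableSpace Y]
    [MeasurableSpace Z]
    (μ : Measure (W × V)) [IsProbabilityMeasure μ]
    (κ₀ : Kernel V Y) [IsMarkovKernel κ₀]
    (ν₀ : Kernel (V × Y) Z) [IsMarkovKernel ν₀]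
    (κ : Kernel (W × V) Y) [IsMarkovKernel κ] (hκ : ∀ p : W × V, κ p = κ₀ p.2)
    (ν : Kernel ((W × V) × Y) Z) [IsMarkovKernel ν]
    (hν : ∀ q : (W × V) × Y, ν q = ν₀ (q.1.2, q.2))
    (f : Z → ℝ) (hf : Measurable f) (C : ℝ) (hfb : ∀ z, |f z| ≤ C)
    (F₀ : V → Y → ℝ) (hF₀ : F₀ = fun v y => ∫ z, f z ∂(ν₀ (v, y)))
    (η : ℝ) (hη : 0 < η)
    (cplus : V → ℝ) (hcmeas : Measurable cplus) (hcpos : ∀ v, 0 < cplus v)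
    (κplus : Kernel V Y) [IsMarkovKernel κplus]
    (hκplus : ∀ v, κplus v = (κ₀ v).withDensity (fun y =>
      ENNReal.ofReal (Real.exp (cplus v * F₀ v y)
        / ∫ y', Real.exp (cplus v * F₀ v y') ∂(κ₀ v))))
    (hkl : ∀ v, klDiv (κplus v) (κ₀ v) = ((η : ℝ) : EReal))
    (κstar : Kernel (W × V) Y) [IsMarkovKernel κstar]
    (hκstar : ∀ p : W × V, κstar p = κplus p.2) :
    IsGreatest {r : ℝ | ∃ κ' : Kernel (W × V) Y, IsMarkovKernel κ' ∧
        (∀ p : W × V, klDiv (κ' p) (κ₀ p.2) ≤ ((η : ℝ) : EReal)) ∧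
        r = ∫ q, f q.2 ∂((μ ⊗ₘ κ') ⊗ₘ ν) - ∫ q, f q.2 ∂((μ ⊗ₘ κ) ⊗ₘ ν)}
      (∫ q, f q.2 ∂((μ ⊗ₘ κstar) ⊗ₘ ν) - ∫ q, f q.2 ∂((μ ⊗ₘ κ) ⊗ₘ ν)) ∧
    IsGreatest {r : ℝ | ∃ lam : Kernel V Y, IsMarkovKernel lam ∧
        (∀ v, klDiv (lam v) (κ₀ v) ≤ ((η : ℝ) : EReal)) ∧
        ∃ κ' : Kernel (W × V) Y, IsMarkovKernel κ' ∧ (∀ p : W × V, κ' p = lam p.2) ∧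
        r = ∫ q, f q.2 ∂((μ ⊗ₘ κ') ⊗ₘ ν) - ∫ q, f q.2 ∂((μ ⊗ₘ κ) ⊗ₘ ν)}
      (∫ q, f q.2 ∂((μ ⊗ₘ κstar) ⊗ₘ ν) - ∫ q, f q.2 ∂((μ ⊗ₘ κ) ⊗ₘ ν)) := by

  classical
  have hF₀sm : StronglyMeasurable (fun p : V × Y => F₀ p.1 p.2) := by
    rw [hF₀]
    exact StronglyMeasurable.integral_kernel_prod_right'
      ((hf.comp measurable_snd).stronglyMeasurable)
  have hF₀b : ∀ v y, |F₀ v y| ≤ C := by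
    intro v y; rw [hF₀]
    exact aux_abs_integral_le _ C hfb
  have hκplusT : ∀ v, κplus v = (κ₀ v).tilted (fun y => cplus v * F₀ v y) := by
    intro v; rw [hκplus v]; rfl
  have hmeas2 : StronglyMeasurable (fun q : (W × V) × Y => F₀ q.1.2 q.2) :=
    hF₀sm.comp_measurable (measurable_fst.snd.prodMk measurable_snd)
  have hI : ∀ (χ : Kernel (W × V) Y), IsMarkovKernel χ →
      ∫ q, f q.2 ∂((μ ⊗ₘ χ) ⊗ₘ ν) = ∫ p, (∫ y, F₀ p.2 y ∂(χ p)) ∂μ := by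
    intro χ hχ
    haveI := hχ
    have hmeas1 : Measurable (fun q : ((W × V) × Y) × Z => f q.2) := hf.comp measurable_snd
    have h1 : Integrable (fun q : ((W × V) × Y) × Z => f q.2) ((μ ⊗ₘ χ) ⊗ₘ ν) :=
      aux_integrable_of_bound _ hmeas1.aestronglyMeasurable C (fun q => hfb q.2)
    rw [Measure.integral_compProd h1]
    have h4 : ∀ q : (W × V) × Y,
        (∫ z, f (((q, z) : ((W × V) × Y) × Z)).2 ∂(ν q)) = F₀ q.1.2 q.2 := by
      intro q; rw [hν q, hF₀]
    simp_rw [h4]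
    have h2 : Integrable (fun q : (W × V) × Y => F₀ q.1.2 q.2) (μ ⊗ₘ χ) :=
      aux_integrable_of_bound _ hmeas2.aestronglyMeasurable C (fun q => hF₀b _ _)
    rw [Measure.integral_compProd h2]
  have hpoint : ∀ (v : V) (Q : Measure Y), IsProbabilityMeasure Q →
      klDiv Q (κ₀ v) ≤ ((η : ℝ) : EReal) →
      ∫ y, F₀ v y ∂Q ≤ ∫ y, F₀ v y ∂(κplus v) := by
    intro v Q hQinst hQ
    haveI := hQinst
    rw [hκplusT v]
    have hklT : klDiv ((κ₀ v).tilted (fun y => cplus v * F₀ v y)) (κ₀ v)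
        = ((η : ℝ) : EReal) := by
      rw [← hκplusT v]; exact hkl v
    exact aux_key (κ₀ v) Q (F₀ v)
      (hF₀sm.measurable.comp measurable_prodMk_left) C (fun y => hF₀b v y)
      (cplus v) (hcpos v) η hklT hQ
  have hIκ' : ∀ (κ' : Kernel (W × V) Y), IsMarkovKernel κ' →
      (∀ p : W × V, klDiv (κ' p) (κ₀ p.2) ≤ ((η : ℝ) : EReal)) →
      ∫ q, f q.2 ∂((μ ⊗ₘ κ') ⊗ₘ ν) ≤ ∫ q, f q.2 ∂((μ ⊗ₘ κstar) ⊗ₘ ν) := by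
    intro κ' hκ'M hcons
    haveI := hκ'M
    rw [hI κ' hκ'M, hI κstar inferInstance]
    have hg1 : Integrable (fun p => ∫ y, F₀ p.2 y ∂(κ' p)) μ :=
      aux_integrable_of_bound μ
        (StronglyMeasurable.integral_kernel_prod_right' (κ := κ') hmeas2).aestronglyMeasurable
        C (fun p => aux_abs_integral_le _ C (fun y => hF₀b _ _))
    have hg2 : Integrable (fun p => ∫ y, F₀ p.2 y ∂(κstar p)) μ :=
      aux_integrable_of_bound μ
        (StronglyMeasurable.integral_kernel_prod_right' (κ := κstar) hmeas2).aestronglyMeasurable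
        C (fun p => aux_abs_integral_le _ C (fun y => hF₀b _ _))
    refine integral_mono hg1 hg2 (fun p => ?_)
    rw [hκstar p]
    exact hpoint p.2 (κ' p) inferInstance (hcons p)
  constructor
  · constructor
    · exact ⟨κstar, inferInstance,
        fun p => by rw [hκstar p]; exact le_of_eq (hkl p.2), rfl⟩
    · rintro r ⟨κ', hκ'M, hcons, rfl⟩
      have h := hIκ' κ' hκ'M hcons
      linarith
  · constructor
    · exact ⟨κplus, inferInstance, fun v => le_of_eq (hkl v),
        κstar, inferInstance, hκstar, rfl⟩
    · rintro r ⟨lam, hlamM, hlcons, κ', hκ'M, hκ'eq, rfl⟩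
      haveI := hκ'M
      have hcons : ∀ p : W × V, klDiv (κ' p) (κ₀ p.2) ≤ ((η : ℝ) : EReal) := fun p => by
        rw [hκ'eq p]; exact hlcons p.2
      have h := hIκ' κ' hκ'M hcons
      linarith
end

section
/- Let μ be a probability measure on ℝ with finite first moment, let β₀, β, σ, a, b be real numbers with σ > 0 and a ≠ 0, let κ be the Markov kernel from ℝ to ℝ given by κ(x) = gaussianReal (β₀ + β·x) (σ²), and let f(y) := a·y + b. Then for every η > 0: sup over all Markov kernels κ′ from ℝ to ℝ satisfying kl(κ′(x)‖κ(x)) ≤ η for all x ∈ ℝ, of ∫_ℝ ( ∫_ℝ f dκ′(x) − ∫_ℝ f dκ(x) ) dμ(x), equals |a|·σ·√(2η), and the corresponding infimum equals −|a|·σ·√(2η); the extrema are attained by the Gaussian kernels κ′(x) = gaussianReal (β₀ + β·x ± sgn(a)·√(2η)·σ) (σ²). In particular the value |a|·σ·√(2η) does not depend on μ. -/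
open MeasureTheory ProbabilityTheory Real Filter Set
open scoped Classical NNReal ProbabilityTheory

namespace GaussAux
open MeasureTheory ProbabilityTheory Real Filter Set
open scoped NNReal ProbabilityTheory ENNReal

variable {v : ℝ≥0}

lemma pdf_mul_exp (m L : ℝ) (hv : v ≠ 0) (x : ℝ) :
    gaussianPDFReal m v x * Real.exp (L * x)
      = Real.exp (L * m + L ^ 2 * v / 2) * gaussianPDFReal (m + L * v) v x := by
  have hv' : (0 : ℝ) < v := by positivity
  have key : Real.exp (-(x - m) ^ 2 / (2 * v) + L * x)
      = Real.exp (L * m + L ^ 2 * v / 2) * Real.exp (-(x - (m + L * v)) ^ 2 / (2 * v)) := by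
    rw [← Real.exp_add]
    congr 1
    field_simp
    ring
  rw [gaussianPDFReal, gaussianPDFReal, mul_assoc, ← Real.exp_add, key]
  ring

lemma integrable_exp_gaussian (m L : ℝ) (hv : v ≠ 0) :
    Integrable (fun x => Real.exp (L * x)) (gaussianReal m v) := by
  rw [gaussianReal_of_var_ne_zero m hv]
  rw [integrable_withDensity_iff (measurable_gaussianPDF m v)
    (ae_of_all _ fun x => ENNReal.ofReal_lt_top)]
  have : (fun x => Real.exp (L * x) * (gaussianPDF m v x).toReal)
      = fun x => Real.exp (L * m + L ^ 2 * v / 2) * gaussianPDFReal (m + L * v) v x := by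
    ext x
    rw [gaussianPDF, ENNReal.toReal_ofReal (gaussianPDFReal_nonneg m v x), mul_comm,
      pdf_mul_exp m L hv]
  rw [this]
  exact (integrable_gaussianPDFReal _ _).const_mul _

lemma integral_exp_gaussian (m L : ℝ) (hv : v ≠ 0) :
    ∫ x, Real.exp (L * x) ∂gaussianReal m v = Real.exp (L * m + L ^ 2 * v / 2) := by
  rw [gaussianReal_of_var_ne_zero m hv]
  simp only [gaussianPDF_def, ENNReal.ofReal]
  rw [integral_withDensity_eq_integral_smul
      (by exact (measurable_gaussianPDFReal m v).real_toNNReal) _]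
  have : (fun x => (Real.toNNReal (gaussianPDFReal m v x)) • Real.exp (L * x))
      = fun x => Real.exp (L * m + L ^ 2 * v / 2) * gaussianPDFReal (m + L * v) v x := by
    ext x
    rw [NNReal.smul_def, smul_eq_mul, Real.coe_toNNReal _ (gaussianPDFReal_nonneg m v x),
      pdf_mul_exp m L hv]
  rw [this, integral_const_mul, integral_gaussianPDFReal_eq_one _ hv, mul_one]

lemma abs_le_exp_add_exp (x : ℝ) : |x| ≤ Real.exp x + Real.exp (-x) := by
  have hx : |x| ≤ Real.exp |x| := by linarith [Real.add_one_le_exp |x|]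
  rcases le_total 0 x with h | h
  · rw [abs_of_nonneg h] at hx ⊢; linarith [Real.exp_nonneg (-x)]
  · rw [abs_of_nonpos h] at hx ⊢; linarith [Real.exp_nonneg x]

lemma integrable_id_gaussian (m : ℝ) (hv : v ≠ 0) :
    Integrable (fun x : ℝ => x) (gaussianReal m v) := by
  have h1 : Integrable (fun x => Real.exp (1 * x) + Real.exp ((-1) * x)) (gaussianReal m v) :=
    (integrable_exp_gaussian m 1 hv).add (integrable_exp_gaussian m (-1) hv)
  refine h1.mono' measurable_id.aestronglyMeasurable (ae_of_all _ fun x => ?_)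
  simp only [one_mul, neg_one_mul, norm_eq_abs]
  exact abs_le_exp_add_exp x

lemma integral_id_gaussian (m : ℝ) (hv : v ≠ 0) :
    ∫ x, x ∂gaussianReal m v = m := by
  have hmap : (gaussianReal 0 v).map (· + m) = gaussianReal m v := by
    simpa using gaussianReal_map_add_const (μ := 0) (v := v) m
  have hsym : (gaussianReal 0 v).map (fun x => (-1 : ℝ) * x) = gaussianReal 0 v := by
    have h1 : (⟨(-1:ℝ)^2, sq_nonneg _⟩ : ℝ≥0) = 1 := by ext; norm_num
    rw [gaussianReal_map_const_mul]
    congr 1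
    · simp
    · ext; simp
  have hint0 : Integrable (fun x : ℝ => x) (gaussianReal 0 v) := integrable_id_gaussian 0 hv
  have h0 : ∫ x, x ∂gaussianReal 0 v = 0 := by
    have := integral_map (f := fun x : ℝ => x)
      (φ := fun x : ℝ => (-1 : ℝ) * x) (μ := gaussianReal 0 v)
      (by fun_prop) (by rw [hsym]; exact hint0.aestronglyMeasurable)
    rw [hsym] at this
    simp only [neg_one_mul] at this
    rw [integral_neg] at this
    linarith
  calc ∫ x, x ∂gaussianReal m v = ∫ x, x ∂(gaussianReal 0 v).map (· + m) := by rw [hmap]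
    _ = ∫ x, (x + m) ∂gaussianReal 0 v := by
        rw [integral_map (by fun_prop) (by rw [hmap]; exact measurable_id.aestronglyMeasurable)]
    _ = m := by rw [integral_add hint0 (integrable_const m), h0, integral_const]; simp



variable {α : Type*} [MeasurableSpace α]

/-- Nonnegativity of the KL integral. -/
lemma integral_llr_nonneg {Q ν : Measure α} [IsProbabilityMeasure Q] [IsProbabilityMeasure ν]
    (h : Q ≪ ν) (hi : Integrable (llr Q ν) Q) : 0 ≤ ∫ x, llr Q ν x ∂Q := by
  have hne : llr Q ν =ᵐ[Q] fun x => -Real.log ((ν.rnDeriv Q x).toReal) := by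
    filter_upwards [neg_llr h] with x hx
    have : llr Q ν x = - llr ν Q x := by
      have := congrArg Neg.neg hx
      simpa using this
    rw [this, llr]
  have hpos : ∀ᵐ x ∂Q, 0 < ν.rnDeriv Q x := Measure.rnDeriv_pos' h
  have hlt : ∀ᵐ x ∂Q, ν.rnDeriv Q x < ∞ := Measure.rnDeriv_lt_top ν Q
  have hbound : ∀ᵐ x ∂Q, 1 - (ν.rnDeriv Q x).toReal ≤ llr Q ν x := by
    filter_upwards [hne, hpos, hlt] with x hx hp hl
    rw [hx]
    have h0 : 0 < (ν.rnDeriv Q x).toReal := ENNReal.toReal_pos hp.ne' hl.ne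
    linarith [Real.log_le_sub_one_of_pos h0]
  have hint2 : Integrable (fun x => 1 - (ν.rnDeriv Q x).toReal) Q :=
    (integrable_const 1).sub Measure.integrable_toReal_rnDeriv
  have hle : ∫ x, (1 - (ν.rnDeriv Q x).toReal) ∂Q ≤ ∫ x, llr Q ν x ∂Q :=
    integral_mono_ae hint2 hi hbound
  have hit : ∫ x, (ν.rnDeriv Q x).toReal ∂Q ≤ 1 := by
    have := Measure.setIntegral_toReal_rnDeriv_le (μ := ν) (ν := Q) (s := Set.univ)
      (by simp : ν Set.univ ≠ ∞)
    simpa using this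
  rw [integral_sub (integrable_const 1) Measure.integrable_toReal_rnDeriv] at hle
  simp only [integral_const, measure_univ, probReal_univ, ENNReal.toReal_one, smul_eq_mul, one_mul] at hle
  linarith

/-- Donsker–Varadhan / Gibbs inequality. -/
lemma gibbs_ineq {Q P : Measure α} [IsProbabilityMeasure Q] [IsProbabilityMeasure P]
    (hQP : Q ≪ P) (hllr : Integrable (llr Q P) Q) {g : α → ℝ}
    (hgQ : Integrable g Q) (hgP : Integrable (fun x => Real.exp (g x)) P) :
    ∫ x, g x ∂Q ≤ ∫ x, llr Q P x ∂Q + Real.log (∫ x, Real.exp (g x) ∂P) := by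
  have hν : IsProbabilityMeasure (P.tilted g) := isProbabilityMeasure_tilted hgP
  have hQν : Q ≪ P.tilted g := hQP.trans (absolutelyContinuous_tilted hgP)
  have hint : Integrable (llr Q (P.tilted g)) Q :=
    integrable_llr_tilted_right hQP hgQ hllr hgP
  have h0 : 0 ≤ ∫ x, llr Q (P.tilted g) x ∂Q := integral_llr_nonneg hQν hint
  rw [integral_llr_tilted_right hQP hgQ hgP hllr] at h0
  linarith

/-- Integrability from exponential integrability w.r.t. the reference measure. -/
lemma integrable_of_exp_llr {Q P : Measure α} [IsProbabilityMeasure Q] [IsProbabilityMeasure P]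
    (hQP : Q ≪ P) (hllr : Integrable (llr Q P) Q) {g : α → ℝ} (hg : Measurable g)
    (hexp : Integrable (fun x => Real.exp (2 * |g x|)) P) : Integrable g Q := by
  set ρ := Q.rnDeriv P with hρ
  have hρm : Measurable ρ := Measure.measurable_rnDeriv Q P
  have hQeq : P.withDensity ρ = Q := Measure.withDensity_rnDeriv_eq Q P hQP
  have hlt : ∀ᵐ x ∂P, ρ x < ∞ := Measure.rnDeriv_lt_top Q P
  refine ⟨hg.aestronglyMeasurable, ?_⟩
  rw [hasFiniteIntegral_iff_norm]
  have hkey : ∀ᵐ x ∂P, ENNReal.ofReal ‖g x‖ * ρ x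
      ≤ ENNReal.ofReal (Real.exp (2 * |g x|)) + ENNReal.ofReal ‖llr Q P x‖ * ρ x := by
    filter_upwards [hlt] with x hx
    rcases le_or_gt (ρ x).toReal (Real.exp |g x|) with hle | hgt
    · refine le_trans ?_ (le_add_right le_rfl)
      rw [← ENNReal.ofReal_toReal hx.ne, ← ENNReal.ofReal_mul (norm_nonneg _)]
      refine ENNReal.ofReal_le_ofReal ?_
      have h1 : |g x| ≤ Real.exp |g x| := by linarith [Real.add_one_le_exp |g x|]
      calc ‖g x‖ * (ρ x).toReal ≤ Real.exp |g x| * Real.exp |g x| := by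
            refine mul_le_mul (h1.trans' le_rfl) hle (ENNReal.toReal_nonneg) (Real.exp_nonneg _)
        _ = Real.exp (2 * |g x|) := by rw [← Real.exp_add]; ring_nf
    · refine le_trans ?_ (le_add_left le_rfl)
      refine mul_le_mul_left (ENNReal.ofReal_le_ofReal ?_) _
      have h1 : 1 ≤ (ρ x).toReal := le_trans (Real.one_le_exp (abs_nonneg _)) hgt.le
      have h2 : |g x| < Real.log ((ρ x).toReal) := by
        have := Real.log_lt_log (Real.exp_pos _) hgt
        rwa [Real.log_exp] at this
      rw [norm_eq_abs, norm_eq_abs, llr]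
      exact h2.le.trans (le_abs_self _)
  have hmeas1 : Measurable fun x => ENNReal.ofReal ‖g x‖ :=
    ENNReal.measurable_ofReal.comp hg.norm
  have hmeas2 : Measurable fun x => ENNReal.ofReal ‖llr Q P x‖ :=
    ENNReal.measurable_ofReal.comp (measurable_llr Q P).norm
  have hwd : ∀ (h : α → ℝ≥0∞), Measurable h →
      ∫⁻ x, h x ∂Q = ∫⁻ x, ρ x * h x ∂P := by
    intro h hh
    rw [← hQeq, lintegral_withDensity_eq_lintegral_mul _ hρm hh]
    rfl
  calc ∫⁻ x, ENNReal.ofReal ‖g x‖ ∂Q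
      = ∫⁻ x, ρ x * ENNReal.ofReal ‖g x‖ ∂P := hwd _ hmeas1
    _ ≤ ∫⁻ x, (ENNReal.ofReal (Real.exp (2 * |g x|))
        + ENNReal.ofReal ‖llr Q P x‖ * ρ x) ∂P := by
        refine lintegral_mono_ae ?_
        filter_upwards [hkey] with x hx
        rwa [mul_comm]
    _ = (∫⁻ x, ENNReal.ofReal (Real.exp (2 * |g x|)) ∂P)
        + ∫⁻ x, ENNReal.ofReal ‖llr Q P x‖ * ρ x ∂P := by
        refine lintegral_add_left ?_ _
        exact ENNReal.measurable_ofReal.comp (by fun_prop)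
    _ < ∞ := by
        have hA : (∫⁻ x, ENNReal.ofReal (Real.exp (2 * |g x|)) ∂P) < ∞ := by
          have := hexp.hasFiniteIntegral
          rw [hasFiniteIntegral_iff_norm] at this
          refine lt_of_le_of_lt (lintegral_mono fun x => ?_) this
          exact ENNReal.ofReal_le_ofReal (le_abs_self _)
        have hB : (∫⁻ x, ENNReal.ofReal ‖llr Q P x‖ * ρ x ∂P) < ∞ := by
          have heq : ∫⁻ x, ENNReal.ofReal ‖llr Q P x‖ * ρ x ∂P
              = ∫⁻ x, ENNReal.ofReal ‖llr Q P x‖ ∂Q := by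
            rw [hwd _ hmeas2]
            congr 1
            ext x
            rw [mul_comm]
          rw [heq]
          have := hllr.hasFiniteIntegral
          rwa [hasFiniteIntegral_iff_norm] at this
        exact ENNReal.add_lt_top.mpr ⟨hA, hB⟩

end GaussAux

namespace GaussAux2
open GaussAux
open MeasureTheory ProbabilityTheory Real Filter Set
open scoped NNReal ProbabilityTheory ENNReal Classical


variable {v : ℝ≥0}

lemma gaussian_ratio (m t : ℝ) (hv : v ≠ 0) (x : ℝ) :
    gaussianPDFReal (m + t) v x / gaussianPDFReal m v x
      = Real.exp ((2 * t * (x - m) - t ^ 2) / (2 * v)) := by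
  have hv' : (0 : ℝ) < v := by positivity
  have hs : (Real.sqrt (2 * π * v))⁻¹ ≠ 0 := by positivity
  rw [gaussianPDFReal, gaussianPDFReal, mul_div_mul_left _ _ hs, ← Real.exp_sub]
  congr 1
  field_simp
  ring

lemma shift_eq_withDensity (m t : ℝ) (hv : v ≠ 0) :
    gaussianReal (m + t) v = (gaussianReal m v).withDensity
      (fun x => ENNReal.ofReal (gaussianPDFReal (m + t) v x / gaussianPDFReal m v x)) := by
  have hmeas : Measurable fun x => ENNReal.ofReal
      (gaussianPDFReal (m + t) v x / gaussianPDFReal m v x) :=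
    ENNReal.measurable_ofReal.comp
      ((measurable_gaussianPDFReal _ _).div (measurable_gaussianPDFReal _ _))
  rw [gaussianReal_of_var_ne_zero m hv, gaussianReal_of_var_ne_zero (m + t) hv,
    ← withDensity_mul _ (measurable_gaussianPDF m v) hmeas]
  congr 1
  ext x
  have hp : gaussianPDFReal m v x ≠ 0 := (gaussianPDFReal_pos m v x hv).ne'
  rw [Pi.mul_apply, gaussianPDF, gaussianPDF,
    ← ENNReal.ofReal_mul (gaussianPDFReal_nonneg m v x), mul_comm,
    div_mul_cancel₀ _ hp]

lemma llr_gaussian_shift (m t : ℝ) (hv : v ≠ 0) :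
    llr (gaussianReal (m + t) v) (gaussianReal m v)
      =ᵐ[gaussianReal (m + t) v] fun x => (2 * t * (x - m) - t ^ 2) / (2 * v) := by
  have hmeas : Measurable fun x => ENNReal.ofReal
      (gaussianPDFReal (m + t) v x / gaussianPDFReal m v x) :=
    ENNReal.measurable_ofReal.comp
      ((measurable_gaussianPDFReal _ _).div (measurable_gaussianPDFReal _ _))
  have hac : gaussianReal (m + t) v ≪ gaussianReal m v :=
    (gaussianReal_absolutelyContinuous (m + t) hv).trans
      (gaussianReal_absolutelyContinuous' m hv)
  have hrn : (gaussianReal (m + t) v).rnDeriv (gaussianReal m v)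
      =ᵐ[gaussianReal m v] fun x => ENNReal.ofReal
        (gaussianPDFReal (m + t) v x / gaussianPDFReal m v x) := by
    conv_lhs => rw [shift_eq_withDensity m t hv]
    exact Measure.rnDeriv_withDensity _ hmeas
  filter_upwards [hac.ae_le hrn] with x hx
  rw [llr, hx, ENNReal.toReal_ofReal
    (div_nonneg (gaussianPDFReal_nonneg _ _ _) (gaussianPDFReal_nonneg _ _ _)),
    gaussian_ratio m t hv x, Real.log_exp]

lemma integrable_affine {Q : Measure ℝ} [IsProbabilityMeasure Q]
    (h : Integrable (fun x : ℝ => x) Q) (c d : ℝ) :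
    Integrable (fun x : ℝ => c * x + d) Q :=
  (h.const_mul c).add (integrable_const d)

lemma integral_affine {Q : Measure ℝ} [IsProbabilityMeasure Q]
    (h : Integrable (fun x : ℝ => x) Q) (c d : ℝ) :
    ∫ x, (c * x + d) ∂Q = c * (∫ x, x ∂Q) + d := by
  rw [integral_add (h.const_mul c) (integrable_const d), integral_const_mul, integral_const]
  simp

lemma shift_fun_eq (m t : ℝ) (hv : v ≠ 0) :
    (fun x : ℝ => (2 * t * (x - m) - t ^ 2) / (2 * v))
      = fun x : ℝ => (t / v) * x + (-(2 * t * m + t ^ 2) / (2 * v)) := by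
  have hv' : (0 : ℝ) < v := by positivity
  ext x
  field_simp
  ring

lemma integrable_llr_gaussian_shift (m t : ℝ) (hv : v ≠ 0) :
    Integrable (llr (gaussianReal (m + t) v) (gaussianReal m v)) (gaussianReal (m + t) v) := by
  refine Integrable.congr ?_ (llr_gaussian_shift m t hv).symm
  rw [shift_fun_eq m t hv]
  exact integrable_affine (integrable_id_gaussian _ hv) _ _

lemma integral_llr_gaussian_shift (m t : ℝ) (hv : v ≠ 0) :
    ∫ x, llr (gaussianReal (m + t) v) (gaussianReal m v) x ∂(gaussianReal (m + t) v)
      = t ^ 2 / (2 * v) := by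
  have hv' : (0 : ℝ) < v := by positivity
  rw [integral_congr_ae (llr_gaussian_shift m t hv), shift_fun_eq m t hv,
    integral_affine (integrable_id_gaussian _ hv) _ _, integral_id_gaussian _ hv]
  field_simp
  ring

lemma klDiv_gaussian_shift (m t : ℝ) (hv : v ≠ 0) :
    klDiv (gaussianReal (m + t) v) (gaussianReal m v) = ((t ^ 2 / (2 * v) : ℝ) : EReal) := by
  have hac : gaussianReal (m + t) v ≪ gaussianReal m v :=
    (gaussianReal_absolutelyContinuous (m + t) hv).trans
      (gaussianReal_absolutelyContinuous' m hv)
  rw [klDiv, if_pos ⟨hac, integrable_llr_gaussian_shift m t hv⟩,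
    integral_llr_gaussian_shift m t hv]


lemma mean_bound {Q : Measure ℝ} [IsProbabilityMeasure Q] {m η : ℝ} (hη : 0 < η) (hv : v ≠ 0)
    (hac : Q ≪ gaussianReal m v) (hllr : Integrable (llr Q (gaussianReal m v)) Q)
    (hkl : ∫ x, llr Q (gaussianReal m v) x ∂Q ≤ η) :
    Integrable (fun x : ℝ => x) Q ∧
      |(∫ x, x ∂Q) - m| ≤ Real.sqrt (2 * η) * Real.sqrt v := by
  have hv' : (0 : ℝ) < v := by positivity
  have hexp2 : Integrable (fun x : ℝ => Real.exp (2 * |x|)) (gaussianReal m v) := by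
    refine ((integrable_exp_gaussian m 2 hv).add (integrable_exp_gaussian m (-2) hv)).mono'
      (by measurability) (ae_of_all _ fun x => ?_)
    rw [norm_eq_abs, abs_of_nonneg (Real.exp_nonneg _)]
    simp only [Pi.add_apply]
    rcases le_total 0 x with h | h
    · rw [abs_of_nonneg h]
      have := Real.exp_nonneg ((-2) * x); linarith
    · rw [abs_of_nonpos h]
      have := Real.exp_nonneg (2 * x)
      have h2 : Real.exp (2 * -x) = Real.exp ((-2) * x) := by ring_nf
      linarith [h2.le, h2.ge]
  have hid : Integrable (fun x : ℝ => x) Q := integrable_of_exp_llr hac hllr measurable_id hexp2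
  have key : ∀ L : ℝ, L * ((∫ x, x ∂Q) - m) ≤ η + L ^ 2 * v / 2 := by
    intro L
    have hgibbs := gibbs_ineq hac hllr (g := fun x => L * x) (hid.const_mul L)
      (integrable_exp_gaussian m L hv)
    rw [integral_exp_gaussian m L hv, Real.log_exp, integral_const_mul] at hgibbs
    nlinarith [hkl]
  set s2 := Real.sqrt (2 * η) with hs2
  set sv := Real.sqrt (v : ℝ) with hsv
  have hs2p : 0 < s2 := Real.sqrt_pos.2 (by linarith)
  have hsvp : 0 < sv := Real.sqrt_pos.2 hv'
  have hs2sq : s2 * s2 = 2 * η := Real.mul_self_sqrt (by linarith)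
  have hsvsq : sv * sv = (v : ℝ) := Real.mul_self_sqrt hv'.le
  set D := (∫ x, x ∂Q) - m with hD
  have habs : ∀ D' : ℝ, (s2 / sv) * D' ≤ 2 * η → D' ≤ s2 * sv := by
    intro D' h1
    have h3 : (s2 / sv) * D' * sv ≤ 2 * η * sv :=
      mul_le_mul_of_nonneg_right h1 hsvp.le
    have h4 : s2 * D' ≤ 2 * η * sv := by
      calc s2 * D' = (s2 / sv) * D' * sv := by field_simp
        _ ≤ 2 * η * sv := h3
    have h5 : D' ≤ (2 * η * sv) / s2 := (le_div_iff₀ hs2p).mpr (by linarith)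
    have h6 : (2 * η * sv) / s2 = s2 * sv := by
      rw [← hs2sq]; field_simp
    linarith
  have hkey1 := key (s2 / sv)
  have hkey2 := key (-(s2 / sv))
  have hLsq : (s2 / sv) ^ 2 * v / 2 = η := by
    rw [div_pow, sq, sq, hs2sq, hsvsq]
    field_simp
  refine ⟨hid, abs_le.2 ⟨?_, ?_⟩⟩
  · have := habs (-D) (by rw [neg_sq] at hkey2; nlinarith)
    linarith
  · exact habs D (by nlinarith)

lemma point_bound {Q : Measure ℝ} [IsProbabilityMeasure Q] {m σ η : ℝ} (hσ : 0 < σ) (hη : 0 < η)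
    (h : klDiv Q (gaussianReal m (Real.toNNReal (σ ^ 2))) ≤ ((η : ℝ) : EReal)) :
    Integrable (fun x : ℝ => x) Q ∧ |(∫ x, x ∂Q) - m| ≤ σ * Real.sqrt (2 * η) := by
  set v := Real.toNNReal (σ ^ 2) with hvdef
  have hvc : (v : ℝ) = σ ^ 2 := Real.coe_toNNReal _ (sq_nonneg σ)
  have hv : v ≠ 0 := by
    intro h0
    have : (v : ℝ) = 0 := by rw [h0]; simp
    rw [hvc] at this
    nlinarith
  rw [klDiv] at h
  by_cases hc : Q ≪ gaussianReal m v ∧ Integrable (llr Q (gaussianReal m v)) Q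
  · rw [if_pos hc] at h
    have hkl : ∫ x, llr Q (gaussianReal m v) x ∂Q ≤ η := by exact_mod_cast h
    obtain ⟨hid, hb⟩ := mean_bound hη hv hc.1 hc.2 hkl
    refine ⟨hid, ?_⟩
    rwa [show Real.sqrt (2 * η) * Real.sqrt (v : ℝ) = σ * Real.sqrt (2 * η) by
      rw [hvc, Real.sqrt_sq hσ.le]; ring] at hb
  · rw [if_neg hc] at h
    exact absurd h (by simp)

lemma integral_affine_gaussian (c d m : ℝ) (hv : v ≠ 0) :
    ∫ y, (c * y + d) ∂gaussianReal m v = c * m + d := by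
  rw [integral_affine (integrable_id_gaussian m hv) c d, integral_id_gaussian m hv]

end GaussAux2

/-- **Theorem 3.4, two-stage instance**: for the Gaussian kernel
`κ(x) = gaussianReal (β₀ + β x) σ²` and linear QoI `f(y) = a y + b`, the model
sensitivity indices over kernels `κ′` with `kl(κ′(x)‖κ(x)) ≤ η` for all `x` are
`±|a| σ √(2η)`, independent of `μ`, and are attained by the mean-shifted Gaussian
kernels `κ′(x) = gaussianReal (β₀ + β x ± sgn(a) √(2η) σ) σ²`. -/
theorem gaussian_kernel_sensitivity_indices
    (μ : Measure ℝ) [IsProbabilityMeasure μ] (hμ : Integrable (fun x : ℝ => x) μ)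
    (β₀ β σ a b : ℝ) (hσ : 0 < σ) (ha : a ≠ 0)
    (κ : Kernel ℝ ℝ) [IsMarkovKernel κ]
    (hκ : ∀ x, κ x = gaussianReal (β₀ + β * x) (Real.toNNReal (σ ^ 2)))
    (η : ℝ) (hη : 0 < η) :
    IsGreatest {r : ℝ | ∃ κ' : Kernel ℝ ℝ, IsMarkovKernel κ' ∧
        (∀ x, klDiv (κ' x) (κ x) ≤ ((η : ℝ) : EReal)) ∧
        r = ∫ x, ((∫ y, (a * y + b) ∂(κ' x)) - (∫ y, (a * y + b) ∂(κ x))) ∂μ}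
      (|a| * σ * Real.sqrt (2 * η)) ∧
    IsLeast {r : ℝ | ∃ κ' : Kernel ℝ ℝ, IsMarkovKernel κ' ∧
        (∀ x, klDiv (κ' x) (κ x) ≤ ((η : ℝ) : EReal)) ∧
        r = ∫ x, ((∫ y, (a * y + b) ∂(κ' x)) - (∫ y, (a * y + b) ∂(κ x))) ∂μ}
      (-(|a| * σ * Real.sqrt (2 * η))) ∧
    (∀ κp : Kernel ℝ ℝ, IsMarkovKernel κp →
      (∀ x, κp x = gaussianReal (β₀ + β * x + Real.sign a * Real.sqrt (2 * η) * σ)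
        (Real.toNNReal (σ ^ 2))) →
      (∀ x, klDiv (κp x) (κ x) ≤ ((η : ℝ) : EReal)) ∧
      ∫ x, ((∫ y, (a * y + b) ∂(κp x)) - (∫ y, (a * y + b) ∂(κ x))) ∂μ
        = |a| * σ * Real.sqrt (2 * η)) ∧
    (∀ κm : Kernel ℝ ℝ, IsMarkovKernel κm →
      (∀ x, κm x = gaussianReal (β₀ + β * x - Real.sign a * Real.sqrt (2 * η) * σ)
        (Real.toNNReal (σ ^ 2))) →
      (∀ x, klDiv (κm x) (κ x) ≤ ((η : ℝ) : EReal)) ∧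
      ∫ x, ((∫ y, (a * y + b) ∂(κm x)) - (∫ y, (a * y + b) ∂(κ x))) ∂μ
        = -(|a| * σ * Real.sqrt (2 * η))) := by
  have hvc : ((Real.toNNReal (σ ^ 2) : ℝ≥0) : ℝ) = σ ^ 2 := Real.coe_toNNReal _ (sq_nonneg σ)
  have hv : Real.toNNReal (σ ^ 2) ≠ 0 := by
    intro h0
    have h1 : ((Real.toNNReal (σ ^ 2) : ℝ≥0) : ℝ) = 0 := by rw [h0]; simp
    rw [hvc] at h1
    nlinarith
  have hsq : Real.sqrt (2 * η) ^ 2 = 2 * η := Real.sq_sqrt (by linarith)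
  have hs : a * Real.sign a = |a| := by
    rcases ha.lt_or_gt with h | h
    · rw [Real.sign_of_neg h, abs_of_neg h]; ring
    · rw [Real.sign_of_pos h, abs_of_pos h]; ring
  have hssq : Real.sign a ^ 2 = 1 := by
    rcases ha.lt_or_gt with h | h
    · rw [Real.sign_of_neg h]; ring
    · rw [Real.sign_of_pos h]; ring
  set C := |a| * σ * Real.sqrt (2 * η) with hC
  set t := Real.sign a * Real.sqrt (2 * η) * σ with ht
  have htsq : t ^ 2 / (2 * ((Real.toNNReal (σ ^ 2) : ℝ≥0) : ℝ)) = η := by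
    have h1 : t ^ 2 = 2 * η * σ ^ 2 := by rw [ht, mul_pow, mul_pow, hssq, hsq]; ring
    rw [h1, hvc]
    have : σ ^ 2 ≠ 0 := by positivity
    field_simp
  have hat : a * t = C := by rw [ht, hC, ← hs]; ring
  have hshift : ∀ t' : ℝ, t' ^ 2 / (2 * ((Real.toNNReal (σ ^ 2) : ℝ≥0) : ℝ)) = η →
      ∀ κp : Kernel ℝ ℝ, IsMarkovKernel κp →
      (∀ x, κp x = gaussianReal (β₀ + β * x + t') (Real.toNNReal (σ ^ 2))) →
      (∀ x, klDiv (κp x) (κ x) ≤ ((η : ℝ) : EReal)) ∧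
      ∫ x, ((∫ y, (a * y + b) ∂(κp x)) - (∫ y, (a * y + b) ∂(κ x))) ∂μ = a * t' := by
    intro t' ht' κp _ hκp
    have hkl : ∀ x, klDiv (κp x) (κ x) = ((η : ℝ) : EReal) := by
      intro x
      rw [hκp x, hκ x, GaussAux2.klDiv_gaussian_shift _ _ hv, ht']
    refine ⟨fun x => (hkl x).le, ?_⟩
    have hint : ∀ x, (∫ y, (a * y + b) ∂(κp x)) - (∫ y, (a * y + b) ∂(κ x)) = a * t' := by
      intro x
      rw [hκp x, hκ x, GaussAux2.integral_affine_gaussian a b _ hv,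
        GaussAux2.integral_affine_gaussian a b _ hv]
      ring
    calc ∫ x, ((∫ y, (a * y + b) ∂(κp x)) - (∫ y, (a * y + b) ∂(κ x))) ∂μ
        = ∫ _, (a * t') ∂μ := integral_congr_ae (ae_of_all _ fun x => hint x)
      _ = a * t' := by simp
  have hbound : ∀ κ' : Kernel ℝ ℝ, IsMarkovKernel κ' →
      (∀ x, klDiv (κ' x) (κ x) ≤ ((η : ℝ) : EReal)) →
      -C ≤ (∫ x, ((∫ y, (a * y + b) ∂(κ' x)) - (∫ y, (a * y + b) ∂(κ x))) ∂μ) ∧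
      (∫ x, ((∫ y, (a * y + b) ∂(κ' x)) - (∫ y, (a * y + b) ∂(κ x))) ∂μ) ≤ C := by
    intro κ' hM hkl
    set g : ℝ → ℝ := fun x => (∫ y, (a * y + b) ∂(κ' x)) - ∫ y, (a * y + b) ∂(κ x) with hg
    have hgb : ∀ x, |g x| ≤ C := by
      intro x
      haveI := hM.isProbabilityMeasure x
      have hx := hkl x
      rw [hκ x] at hx
      obtain ⟨hid, hb⟩ := GaussAux2.point_bound hσ hη hx
      rw [hg]
      dsimp only
      rw [GaussAux2.integral_affine hid a b, hκ x,
        GaussAux2.integral_affine_gaussian a b _ hv]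
      have heq : a * (∫ y, y ∂κ' x) + b - (a * (β₀ + β * x) + b)
          = a * ((∫ y, y ∂κ' x) - (β₀ + β * x)) := by ring
      rw [heq, abs_mul, hC]
      calc |a| * |(∫ y, y ∂κ' x) - (β₀ + β * x)|
          ≤ |a| * (σ * Real.sqrt (2 * η)) := mul_le_mul_of_nonneg_left hb (abs_nonneg a)
        _ = |a| * σ * Real.sqrt (2 * η) := by ring
    have hsm : StronglyMeasurable g := by
      refine StronglyMeasurable.sub ?_ ?_
      · exact MeasureTheory.StronglyMeasurable.integral_kernel_prod_right (κ := κ')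
          (f := fun _ y => a * y + b)
          (Measurable.stronglyMeasurable ((measurable_snd.const_mul a).add_const b))
      · exact MeasureTheory.StronglyMeasurable.integral_kernel_prod_right (κ := κ)
          (f := fun _ y => a * y + b)
          (Measurable.stronglyMeasurable ((measurable_snd.const_mul a).add_const b))
    have hgi : Integrable g μ :=
      (integrable_const C).mono' hsm.aestronglyMeasurable
        (ae_of_all _ fun x => by rw [norm_eq_abs]; exact hgb x)
    constructor
    · calc -C = ∫ _, (-C) ∂μ := by simp
        _ ≤ ∫ x, g x ∂μ := integral_mono (integrable_const _) hgi fun x => (abs_le.1 (hgb x)).1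
    · calc ∫ x, g x ∂μ ≤ ∫ _, C ∂μ :=
          integral_mono hgi (integrable_const _) fun x => (abs_le.1 (hgb x)).2
        _ = C := by simp
  have hmemP : ∃ κ' : Kernel ℝ ℝ, IsMarkovKernel κ' ∧
      (∀ x, klDiv (κ' x) (κ x) ≤ ((η : ℝ) : EReal)) ∧
      C = ∫ x, ((∫ y, (a * y + b) ∂(κ' x)) - (∫ y, (a * y + b) ∂(κ x))) ∂μ := by
    refine ⟨Kernel.map κ (· + t), Kernel.IsMarkovKernel.map κ (measurable_id'.add_const t), ?_⟩
    haveI : IsMarkovKernel (Kernel.map κ (· + t)) :=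
      Kernel.IsMarkovKernel.map κ (measurable_id'.add_const t)
    have hκ' : ∀ x, (Kernel.map κ (· + t)) x = gaussianReal (β₀ + β * x + t)
        (Real.toNNReal (σ ^ 2)) := fun x => by
      rw [Kernel.map_apply κ (measurable_id'.add_const t), hκ x, gaussianReal_map_add_const]
    obtain ⟨h1, h2⟩ := hshift t htsq _ ‹_› hκ'
    exact ⟨h1, (h2.trans hat).symm⟩
  have hmemM : ∃ κ' : Kernel ℝ ℝ, IsMarkovKernel κ' ∧
      (∀ x, klDiv (κ' x) (κ x) ≤ ((η : ℝ) : EReal)) ∧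
      -C = ∫ x, ((∫ y, (a * y + b) ∂(κ' x)) - (∫ y, (a * y + b) ∂(κ x))) ∂μ := by
    refine ⟨Kernel.map κ (· + (-t)),
      Kernel.IsMarkovKernel.map κ (measurable_id'.add_const (-t)), ?_⟩
    haveI : IsMarkovKernel (Kernel.map κ (· + (-t))) :=
      Kernel.IsMarkovKernel.map κ (measurable_id'.add_const (-t))
    have hκ' : ∀ x, (Kernel.map κ (· + (-t))) x = gaussianReal (β₀ + β * x + (-t))
        (Real.toNNReal (σ ^ 2)) := fun x => by
      rw [Kernel.map_apply κ (measurable_id'.add_const (-t)), hκ x, gaussianReal_map_add_const]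
    have ht2 : (-t) ^ 2 / (2 * ((Real.toNNReal (σ ^ 2) : ℝ≥0) : ℝ)) = η := by
      rw [neg_sq]; exact htsq
    obtain ⟨h1, h2⟩ := hshift (-t) ht2 _ ‹_› hκ'
    refine ⟨h1, ?_⟩
    rw [h2, mul_neg, hat]
  refine ⟨⟨hmemP, ?_⟩, ⟨hmemM, ?_⟩, ?_, ?_⟩
  · rintro r ⟨κ', hM, hkl, rfl⟩
    exact (hbound κ' hM hkl).2
  · rintro r ⟨κ', hM, hkl, rfl⟩
    exact (hbound κ' hM hkl).1
  · intro κp hm hk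
    obtain ⟨h1, h2⟩ := hshift t htsq κp hm hk
    exact ⟨h1, h2.trans hat⟩
  · intro κm hm hk
    have hk' : ∀ x, κm x = gaussianReal (β₀ + β * x + (-t)) (Real.toNNReal (σ ^ 2)) := by
      intro x
      rw [hk x, sub_eq_add_neg]
    have ht2 : (-t) ^ 2 / (2 * ((Real.toNNReal (σ ^ 2) : ℝ≥0) : ℝ)) = η := by
      rw [neg_sq]; exact htsq
    obtain ⟨h1, h2⟩ := hshift (-t) ht2 κm hm hk'
    exact ⟨h1, by rw [h2, mul_neg, hat]⟩
end

section
/- Let β₀, β, a, b be real numbers, and let ν and ν′ be probability measures on ℝ with finite first moment and mean zero. Define the Markov kernels κ_ν and κ_{ν′} from ℝ to ℝ by κ_ν(x) := pushforward of ν under y ↦ β₀ + β·x + y, and similarly for κ_{ν′}. Let f(y) := a·y + b. Then: (i) for every x ∈ ℝ, ∫ f dκ_ν(x) = a·(β₀ + β·x) + b = ∫ f dκ_{ν′}(x); (ii) for every probability measure μ on ℝ with finite first moment, ∫∫ f(y) κ_ν(x)(dy) μ(dx) = ∫∫ f(y) κ_{ν′}(x)(dy) μ(dx); and (iii) for every η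 > 0, sup over probability measures μ̃ with μ̃ ≪ μ, finite first moment and kl(μ̃‖μ) ≤ η, of ∫∫ f(y) κ_ν(x)(dy) μ̃(dx) − ∫∫ f(y) κ_ν(x)(dy) μ(dx), is the same whether κ_ν or κ_{ν′} is used. That is, replacing the noise distribution of the downstream component by any other mean-zero distribution changes neither the predicted QoI nor the model sensitivity index of the upstream component. -/
open MeasureTheory Real Filter Set
open scoped Classical

lemma shift_mean (c a b : ℝ) (ν : Measure ℝ) [IsProbabilityMeasure ν]
    (hint : Integrable (fun y : ℝ => y) ν) (hmean : ∫ y, y ∂ν = 0) :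
    ∫ y, (a * y + b) ∂(Measure.map (fun y => c + y) ν) = a * c + b := by
  rw [integral_map (by fun_prop) (Measurable.aestronglyMeasurable (by fun_prop))]
  have : ∀ y : ℝ, a * (c + y) + b = a * y + (a * c + b) := by intro y; ring
  simp_rw [this]
  rw [integral_add (hint.const_mul a) (integrable_const _), integral_const_mul, hmean,
    integral_const]
  simp

/-- **Theorem 5.1(a), two-stage kernel form (correctability)**: replacing the mean-zero
noise distribution `ν` of the downstream linear component `y = β₀ + β x + ε` by any other
mean-zero distribution `ν′` changes neither the conditional means (i), nor the predicted
QoI (ii), nor the model sensitivity index of the upstream component (iii). -/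
theorem correctability_mean_zero_noise_replacement
    (β₀ β a b : ℝ)
    (ν ν' : Measure ℝ) [IsProbabilityMeasure ν] [IsProbabilityMeasure ν']
    (hνint : Integrable (fun y : ℝ => y) ν) (hν'int : Integrable (fun y : ℝ => y) ν')
    (hνmean : ∫ y, y ∂ν = 0) (hν'mean : ∫ y, y ∂ν' = 0) :
    (∀ x : ℝ,
      (∫ y, (a * y + b) ∂(Measure.map (fun y => β₀ + β * x + y) ν)
          = a * (β₀ + β * x) + b) ∧
      (∫ y, (a * y + b) ∂(Measure.map (fun y => β₀ + β * x + y) ν')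
          = a * (β₀ + β * x) + b)) ∧
    (∀ μ : Measure ℝ, IsProbabilityMeasure μ → Integrable (fun x : ℝ => x) μ →
      ∫ x, (∫ y, (a * y + b) ∂(Measure.map (fun y => β₀ + β * x + y) ν)) ∂μ
        = ∫ x, (∫ y, (a * y + b) ∂(Measure.map (fun y => β₀ + β * x + y) ν')) ∂μ) ∧
    (∀ μ : Measure ℝ, IsProbabilityMeasure μ → Integrable (fun x : ℝ => x) μ →
      ∀ η : ℝ, 0 < η →
      sSup {r : ℝ | ∃ μt : Measure ℝ, IsProbabilityMeasure μt ∧ μt ≪ μ ∧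
          Integrable (fun x : ℝ => x) μt ∧ klDiv μt μ ≤ ((η : ℝ) : EReal) ∧
          r = ∫ x, (∫ y, (a * y + b) ∂(Measure.map (fun y => β₀ + β * x + y) ν)) ∂μt
            - ∫ x, (∫ y, (a * y + b) ∂(Measure.map (fun y => β₀ + β * x + y) ν)) ∂μ}
      = sSup {r : ℝ | ∃ μt : Measure ℝ, IsProbabilityMeasure μt ∧ μt ≪ μ ∧
          Integrable (fun x : ℝ => x) μt ∧ klDiv μt μ ≤ ((η : ℝ) : EReal) ∧
          r = ∫ x, (∫ y, (a * y + b) ∂(Measure.map (fun y => β₀ + β * x + y) ν')) ∂μt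
            - ∫ x, (∫ y, (a * y + b) ∂(Measure.map (fun y => β₀ + β * x + y) ν')) ∂μ}) := by
  have key : ∀ (τ : Measure ℝ) [IsProbabilityMeasure τ], Integrable (fun y : ℝ => y) τ →
      (∫ y, y ∂τ = 0) → ∀ x : ℝ,
      ∫ y, (a * y + b) ∂(Measure.map (fun y => β₀ + β * x + y) τ)
        = a * (β₀ + β * x) + b := by
    intro τ _ hint hmean x
    exact shift_mean (β₀ + β * x) a b τ hint hmean
  refine ⟨fun x => ⟨key ν hνint hνmean x, key ν' hν'int hν'mean x⟩, ?_, ?_⟩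
  · intro μ _ _
    simp_rw [key ν hνint hνmean, key ν' hν'int hν'mean]
  · intro μ _ _ η _
    congr 1
    ext r
    simp_rw [key ν hνint hνmean, key ν' hν'int hν'mean]
end

section
/- Let X and Y be standard Borel (or countably generated) measurable spaces, μ and μ′ probability measures on X, and κ and κ′ Markov kernels from X to Y. Then the Kullback–Leibler divergence satisfies the chain rule kl( μ′ ⊗ κ′ ‖ μ ⊗ κ ) = kl(μ′‖μ) + ∫_X kl( κ′(x) ‖ κ(x) ) dμ′(x), with both sides equal to +∞ precisely when either term on the right is +∞. -/
open MeasureTheory ProbabilityTheory Real Filter Set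
open scoped Classical ProbabilityTheory
open scoped ENNReal

/-- The conditional Kullback–Leibler divergence `∫_X kl(κ′(x)‖κ(x)) dμ′(x)`, equal to
`+∞` if `kl(κ′(x)‖κ(x)) = +∞` on a set of positive `μ′`-measure or if the (a.e. real)
integrand fails to be `μ′`-integrable. -/
noncomputable def condKLDiv {X Y : Type*} [MeasurableSpace X] [MeasurableSpace Y]
    (κ' κ : ProbabilityTheory.Kernel X Y) (μ' : Measure X) : EReal :=
  if (∀ᵐ x ∂μ', klDiv (κ' x) (κ x) ≠ ⊤) ∧
      Integrable (fun x => (klDiv (κ' x) (κ x)).toReal) μ' then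
    ((∫ x, (klDiv (κ' x) (κ x)).toReal ∂μ' : ℝ) : EReal)
  else ⊤

section AuxBasic

variable {α : Type*} [MeasurableSpace α]

lemma aux_lintegral_negPart_llr_le (P' P : Measure α) [IsProbabilityMeasure P']
    [IsProbabilityMeasure P] (h : P' ≪ P) :
    ∫⁻ a, ENNReal.ofReal (max (-(llr P' P a)) 0) ∂P' ≤ 1 := by
  have hmeas : Measurable fun a => ENNReal.ofReal (max (-(llr P' P a)) 0) :=
    ((measurable_llr P' P).neg.max measurable_const).ennreal_ofReal
  rw [← lintegral_rnDeriv_mul h hmeas.aemeasurable]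
  calc ∫⁻ a, P'.rnDeriv P a * ENNReal.ofReal (max (-(llr P' P a)) 0) ∂P
      ≤ ∫⁻ _, 1 ∂P := by
        refine lintegral_mono_ae ?_
        filter_upwards [P'.rnDeriv_lt_top P] with a ha
        rcases eq_or_ne (P'.rnDeriv P a) 0 with h0 | h0
        · simp [h0]
        have hr : 0 < (P'.rnDeriv P a).toReal := ENNReal.toReal_pos h0 ha.ne
        set r := (P'.rnDeriv P a).toReal with hrdef
        have hP : P'.rnDeriv P a = ENNReal.ofReal r := by
          rw [hrdef, ENNReal.ofReal_toReal ha.ne]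
        rw [hP, llr, ← hrdef, ← ENNReal.ofReal_mul hr.le]
        refine (ENNReal.ofReal_le_one).mpr ?_
        rcases le_or_gt 1 r with h1 | h1
        · have : max (-Real.log r) 0 = 0 := by
            simp [Real.log_nonneg h1]
          simp [this]
        · have hlog : -Real.log r ≤ r⁻¹ - 1 := by
            have := Real.log_le_sub_one_of_pos (inv_pos.mpr hr)
            rwa [Real.log_inv] at this
          have : r * max (-Real.log r) 0 ≤ r * max (r⁻¹ - 1) 0 :=
            mul_le_mul_of_nonneg_left (max_le_max hlog le_rfl) hr.le
          refine this.trans ?_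
          rcases le_or_gt (r⁻¹ - 1) 0 with h2 | h2
          · simp [max_eq_right h2]
          · rw [max_eq_left h2.le, mul_sub, mul_inv_cancel₀ hr.ne', mul_one]
            nlinarith
    _ = 1 := by simp

lemma aux_integrable_negPart_llr (P' P : Measure α) [IsProbabilityMeasure P']
    [IsProbabilityMeasure P] (h : P' ≪ P) :
    Integrable (fun a => max (-(llr P' P a)) 0) P' := by
  refine ⟨((measurable_llr P' P).neg.max measurable_const).aestronglyMeasurable, ?_⟩
  rw [hasFiniteIntegral_iff_norm]
  have : ∀ a, ENNReal.ofReal ‖max (-(llr P' P a)) 0‖ =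
      ENNReal.ofReal (max (-(llr P' P a)) 0) := by
    intro a; rw [Real.norm_of_nonneg (le_max_right _ _)]
  simp_rw [this]
  exact (aux_lintegral_negPart_llr_le P' P h).trans_lt ENNReal.one_lt_top

lemma aux_integral_negPart_llr_le (P' P : Measure α) [IsProbabilityMeasure P']
    [IsProbabilityMeasure P] (h : P' ≪ P) :
    ∫ a, max (-(llr P' P a)) 0 ∂P' ≤ 1 := by
  have heq := integral_eq_lintegral_of_nonneg_ae
    (f := fun a => max (-(llr P' P a)) 0) (μ := P')
    (ae_of_all _ fun a => le_max_right _ _)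
    ((measurable_llr P' P).neg.max measurable_const).aestronglyMeasurable
  rw [heq]
  have := aux_lintegral_negPart_llr_le P' P h
  calc (∫⁻ a, ENNReal.ofReal (max (-(llr P' P a)) 0) ∂P').toReal
      ≤ (1 : ℝ≥0∞).toReal := ENNReal.toReal_mono (by simp) this
    _ = 1 := by simp

lemma aux_integral_abs_llr_le (P' P : Measure α) [IsProbabilityMeasure P']
    [IsProbabilityMeasure P] (h : P' ≪ P) (hi : Integrable (llr P' P) P') :
    ∫ a, |llr P' P a| ∂P' ≤ ∫ a, llr P' P a ∂P' + 2 := by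
  have habs : ∀ a, |llr P' P a| = llr P' P a + 2 * max (-(llr P' P a)) 0 := by
    intro a
    rcases le_or_gt 0 (llr P' P a) with h0 | h0
    · rw [abs_of_nonneg h0, max_eq_right (by linarith)]; ring
    · rw [abs_of_neg h0, max_eq_left (by linarith)]; ring
  simp_rw [habs]
  rw [integral_add hi ((aux_integrable_negPart_llr P' P h).const_mul 2)]
  have := aux_integral_negPart_llr_le P' P h
  rw [integral_const_mul]
  linarith

lemma aux_integral_llr_nonneg (P' P : Measure α) [IsProbabilityMeasure P']
    [IsProbabilityMeasure P] (h : P' ≪ P) (hi : Integrable (llr P' P) P') :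
    0 ≤ ∫ a, llr P' P a ∂P' := by
  have hexp : (fun a => rexp (-(llr P' P a))) =ᵐ[P'] fun a => (P.rnDeriv P' a).toReal :=
    exp_neg_llr h
  have hint_exp : Integrable (fun a => rexp (-(llr P' P a))) P' :=
    (Measure.integrable_toReal_rnDeriv (μ := P) (ν := P')).congr hexp.symm
  have hjensen : rexp (∫ a, -(llr P' P a) ∂P') ≤ ∫ a, rexp (-(llr P' P a)) ∂P' := by
    refine (convexOn_exp.map_integral_le ?_ ?_ ?_ hi.neg hint_exp :)
    · exact continuousOn_exp
    · exact isClosed_univ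
    · exact ae_of_all _ fun _ => mem_univ _
  have hle : ∫ a, rexp (-(llr P' P a)) ∂P' ≤ 1 := by
    rw [integral_congr_ae hexp]
    calc ∫ a, (P.rnDeriv P' a).toReal ∂P'
        ≤ (P univ).toReal := by
          rw [← setIntegral_univ]
          exact Measure.setIntegral_toReal_rnDeriv_le (by simp)
      _ = 1 := by simp
  have : ∫ a, -(llr P' P a) ∂P' ≤ 0 := by
    have h1 : rexp (∫ a, -(llr P' P a) ∂P') ≤ rexp 0 := by
      rw [Real.exp_zero]; exact hjensen.trans hle
    exact (Real.exp_le_exp).mp h1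
  rw [integral_neg] at this
  linarith

lemma aux_klDiv_ne_bot (Q P : Measure α) : klDiv Q P ≠ ⊥ := by
  rw [klDiv]
  split_ifs
  · exact EReal.coe_ne_bot _
  · simp

end AuxBasic

section AuxCompProd

variable {X Y : Type*} [MeasurableSpace X] [MeasurableSpace Y]

lemma aux_condKLDiv_ne_bot (κ' κ : Kernel X Y) (μ' : Measure X) :
    condKLDiv κ' κ μ' ≠ ⊥ := by
  rw [condKLDiv]
  split_ifs
  · exact EReal.coe_ne_bot _
  · simp

lemma aux_ae_rnDeriv_ne_zero_imp {μ' μ : Measure X} [SigmaFinite μ'] [SigmaFinite μ]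
    (h : μ' ≪ μ) {p : X → Prop} (hp : ∀ᵐ x ∂μ', p x) :
    ∀ᵐ x ∂μ, μ'.rnDeriv μ x ≠ 0 → p x := by
  set t := toMeasurable μ' {x | ¬ p x} with ht_def
  have ht : MeasurableSet t := measurableSet_toMeasurable _ _
  have hμ't : μ' t = 0 := by
    rw [ht_def, measure_toMeasurable]
    exact hp
  have hint : ∫⁻ x in t, μ'.rnDeriv μ x ∂μ = 0 := by
    rw [Measure.setLIntegral_rnDeriv h]
    exact hμ't
  have h0 : ∀ᵐ x ∂μ, x ∈ t → μ'.rnDeriv μ x = 0 :=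
    (setLIntegral_eq_zero_iff ht (Measure.measurable_rnDeriv μ' μ)).mp hint
  filter_upwards [h0] with x hx hne
  by_contra hpx
  exact hne (hx (subset_toMeasurable _ _ hpx))

variable [MeasurableSpace.CountablyGenerated Y]
  (μ μ' : Measure X) [IsProbabilityMeasure μ] [IsProbabilityMeasure μ']
  (κ κ' : Kernel X Y) [IsMarkovKernel κ] [IsMarkovKernel κ']

lemma aux_compProd_ac_iff :
    (μ' ⊗ₘ κ') ≪ (μ ⊗ₘ κ) ↔ μ' ≪ μ ∧ ∀ᵐ x ∂μ', κ' x ≪ κ x := by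
  constructor
  · intro h
    have hnz : ∀ x, NeZero (κ' x) := fun x => ⟨(IsProbabilityMeasure.ne_zero (κ' x))⟩
    have h1 : μ' ≪ μ := Measure.absolutelyContinuous_of_compProd h
    refine ⟨h1, ?_⟩
    have hS : (μ ⊗ₘ κ) (Kernel.mutuallySingularSet κ' κ) = 0 := by
      rw [Measure.compProd_apply (Kernel.measurableSet_mutuallySingularSet κ' κ)]
      have hpre : ∀ x, (Prod.mk x ⁻¹' Kernel.mutuallySingularSet κ' κ)
          = Kernel.mutuallySingularSetSlice κ' κ x := fun x => rfl
      simp_rw [hpre, Kernel.measure_mutuallySingularSetSlice κ' κ, lintegral_zero]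
    have hS' := h hS
    rw [Measure.compProd_apply (Kernel.measurableSet_mutuallySingularSet κ' κ),
      lintegral_eq_zero_iff
        (Kernel.measurable_kernel_prodMk_left
          (Kernel.measurableSet_mutuallySingularSet κ' κ))] at hS'
    filter_upwards [hS'] with x hx
    rw [← Kernel.singularPart_eq_zero_iff_absolutelyContinuous,
      Kernel.singularPart_eq_zero_iff_apply_eq_zero]
    have hle : ∀ s : Set Y, Kernel.singularPart κ' κ x s ≤ κ' x s := by
      intro s
      conv_rhs => rw [← Kernel.rnDeriv_add_singularPart κ' κ]
      simp
    have hx' : κ' x (Kernel.mutuallySingularSetSlice κ' κ x) = 0 := hx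
    exact le_antisymm ((hle _).trans hx'.le) zero_le
  · rintro ⟨h1, h2⟩
    exact Measure.AbsolutelyContinuous.compProd h1 h2

variable {μ μ' κ κ'}

lemma aux_compProd_eq_withDensity (hμ : μ' ≪ μ) (hκ : ∀ᵐ x ∂μ', κ' x ≪ κ x) :
    μ' ⊗ₘ κ' = (μ ⊗ₘ κ).withDensity
      (fun p => μ'.rnDeriv μ p.1 * Kernel.rnDeriv κ' κ p.1 p.2) := by
  have hg : Measurable (fun p : X × Y => μ'.rnDeriv μ p.1 * Kernel.rnDeriv κ' κ p.1 p.2) :=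
    ((Measure.measurable_rnDeriv μ' μ).comp measurable_fst).mul (Kernel.measurable_rnDeriv κ' κ)
  have key : ∀ (s : Set X) (t : Set Y), MeasurableSet s → MeasurableSet t →
      ((μ ⊗ₘ κ).withDensity
        (fun p => μ'.rnDeriv μ p.1 * Kernel.rnDeriv κ' κ p.1 p.2)) (s ×ˢ t)
        = (μ' ⊗ₘ κ') (s ×ˢ t) := by
    intro s t hs ht
    rw [withDensity_apply _ (hs.prod ht), Measure.setLIntegral_compProd hg hs ht]
    have h1 : ∀ x, ∫⁻ y in t, μ'.rnDeriv μ x * Kernel.rnDeriv κ' κ x y ∂(κ x)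
        = μ'.rnDeriv μ x * (κ.withDensity (Kernel.rnDeriv κ' κ)) x t := by
      intro x
      rw [lintegral_const_mul _ (Kernel.measurable_rnDeriv_right κ' κ x),
        Kernel.withDensity_apply' _ (Kernel.measurable_rnDeriv κ' κ) x t]
    simp_rw [h1]
    have h2 : (fun x => μ'.rnDeriv μ x * (κ.withDensity (Kernel.rnDeriv κ' κ)) x t)
        =ᵐ[μ] fun x => μ'.rnDeriv μ x * κ' x t := by
      filter_upwards [aux_ae_rnDeriv_ne_zero_imp hμ hκ] with x hx
      rcases eq_or_ne (μ'.rnDeriv μ x) 0 with h0 | h0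
      · simp [h0]
      · rw [Kernel.withDensity_rnDeriv_eq (hx h0)]
    rw [lintegral_congr_ae (ae_restrict_of_ae h2),
      setLIntegral_rnDeriv_mul hμ ((Kernel.measurable_coe κ' ht)).aemeasurable hs,
      Measure.compProd_apply_prod hs ht]
  have huniv : ((μ ⊗ₘ κ).withDensity
      (fun p => μ'.rnDeriv μ p.1 * Kernel.rnDeriv κ' κ p.1 p.2)) univ = (μ' ⊗ₘ κ') univ := by
    rw [← univ_prod_univ]
    exact key univ univ MeasurableSet.univ MeasurableSet.univ
  haveI : IsFiniteMeasure ((μ ⊗ₘ κ).withDensity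
      (fun p => μ'.rnDeriv μ p.1 * Kernel.rnDeriv κ' κ p.1 p.2)) :=
    ⟨by rw [huniv]; exact measure_lt_top _ _⟩
  refine (MeasureTheory.ext_of_generate_finite _ generateFrom_prod.symm isPiSystem_prod ?_
    huniv).symm
  rintro s ⟨s₁, hs₁, s₂, hs₂, rfl⟩
  exact key s₁ s₂ hs₁ hs₂

lemma aux_rnDeriv_compProd (hμ : μ' ≪ μ) (hκ : ∀ᵐ x ∂μ', κ' x ≪ κ x) :
    (μ' ⊗ₘ κ').rnDeriv (μ ⊗ₘ κ)
      =ᵐ[μ ⊗ₘ κ] fun p => μ'.rnDeriv μ p.1 * Kernel.rnDeriv κ' κ p.1 p.2 := by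
  have hg : Measurable (fun p : X × Y => μ'.rnDeriv μ p.1 * Kernel.rnDeriv κ' κ p.1 p.2) :=
    ((Measure.measurable_rnDeriv μ' μ).comp measurable_fst).mul (Kernel.measurable_rnDeriv κ' κ)
  have := Measure.rnDeriv_withDensity (μ ⊗ₘ κ) hg
  rwa [← aux_compProd_eq_withDensity hμ hκ] at this

lemma aux_llr_compProd (hμ : μ' ≪ μ) (hκ : ∀ᵐ x ∂μ', κ' x ≪ κ x) :
    llr (μ' ⊗ₘ κ') (μ ⊗ₘ κ) =ᵐ[μ' ⊗ₘ κ']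
      fun p => llr μ' μ p.1 + Real.log (Kernel.rnDeriv κ' κ p.1 p.2).toReal := by
  have hAC : (μ' ⊗ₘ κ') ≪ (μ ⊗ₘ κ) := Measure.AbsolutelyContinuous.compProd hμ hκ
  have m1 : Measurable (fun p : X × Y => μ'.rnDeriv μ p.1) :=
    (Measure.measurable_rnDeriv μ' μ).comp measurable_fst
  have m2 : Measurable (fun p : X × Y => Kernel.rnDeriv κ' κ p.1 p.2) :=
    Kernel.measurable_rnDeriv κ' κ
  have H1 : ∀ᵐ p ∂(μ' ⊗ₘ κ'), μ'.rnDeriv μ p.1 ≠ 0 ∧ μ'.rnDeriv μ p.1 ≠ ∞ := by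
    refine Measure.ae_compProd_of_ae_ae
      (p := fun p : X × Y => μ'.rnDeriv μ p.1 ≠ 0 ∧ μ'.rnDeriv μ p.1 ≠ ∞) ?_ ?_
    · exact ((m1 (measurableSet_singleton 0)).compl).inter
        ((m1 (measurableSet_singleton ∞)).compl)
    · filter_upwards [Measure.rnDeriv_pos hμ, hμ.ae_le (Measure.rnDeriv_ne_top μ' μ)]
        with x h1 h2
      exact ae_of_all _ fun y => ⟨h1.ne', h2⟩
  have H2 : ∀ᵐ p ∂(μ' ⊗ₘ κ'),
      Kernel.rnDeriv κ' κ p.1 p.2 ≠ 0 ∧ Kernel.rnDeriv κ' κ p.1 p.2 ≠ ∞ := by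
    refine Measure.ae_compProd_of_ae_ae
      (p := fun p : X × Y => Kernel.rnDeriv κ' κ p.1 p.2 ≠ 0 ∧ Kernel.rnDeriv κ' κ p.1 p.2 ≠ ∞)
      ?_ ?_
    · exact ((m2 (measurableSet_singleton 0)).compl).inter
        ((m2 (measurableSet_singleton ∞)).compl)
    · filter_upwards [hκ] with x hx
      filter_upwards [Kernel.rnDeriv_pos hx, hx.ae_le (Kernel.rnDeriv_ne_top κ' κ)]
        with y h1 h2
      exact ⟨h1.ne', h2⟩
  filter_upwards [hAC.ae_le (aux_rnDeriv_compProd hμ hκ), H1, H2] with p hp h1 h2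
  have hA : (μ'.rnDeriv μ p.1).toReal ≠ 0 := ENNReal.toReal_ne_zero.mpr ⟨h1.1, h1.2⟩
  have hB : (Kernel.rnDeriv κ' κ p.1 p.2).toReal ≠ 0 := ENNReal.toReal_ne_zero.mpr ⟨h2.1, h2.2⟩
  rw [llr, hp, ENNReal.toReal_mul, Real.log_mul hA hB]
  rfl

lemma aux_fiber_llr (hκ : ∀ᵐ x ∂μ', κ' x ≪ κ x) :
    ∀ᵐ x ∂μ', (fun y => Real.log (Kernel.rnDeriv κ' κ x y).toReal)
      =ᵐ[κ' x] llr (κ' x) (κ x) := by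
  filter_upwards [hκ] with x hx
  filter_upwards [hx.ae_le (Kernel.rnDeriv_eq_rnDeriv_measure (κ := κ') (η := κ) (a := x))]
    with y hy
  rw [hy]
  rfl

lemma aux_main (hμ : μ' ≪ μ) (hκ : ∀ᵐ x ∂μ', κ' x ≪ κ x) :
    (Integrable (llr (μ' ⊗ₘ κ') (μ ⊗ₘ κ)) (μ' ⊗ₘ κ') ↔
      (Integrable (llr μ' μ) μ' ∧ (∀ᵐ x ∂μ', Integrable (llr (κ' x) (κ x)) (κ' x)) ∧
        Integrable (fun x => ∫ y, llr (κ' x) (κ x) y ∂(κ' x)) μ')) ∧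
    (Integrable (llr (μ' ⊗ₘ κ') (μ ⊗ₘ κ)) (μ' ⊗ₘ κ') →
      ∫ p, llr (μ' ⊗ₘ κ') (μ ⊗ₘ κ) p ∂(μ' ⊗ₘ κ')
        = ∫ x, llr μ' μ x ∂μ' + ∫ x, ∫ y, llr (κ' x) (κ x) y ∂(κ' x) ∂μ') := by
  set G : X × Y → ℝ :=
    fun p => llr μ' μ p.1 + Real.log (Kernel.rnDeriv κ' κ p.1 p.2).toReal with hG_def
  have hGmeas : Measurable G :=
    ((measurable_llr μ' μ).comp measurable_fst).add
      ((Kernel.measurable_rnDeriv κ' κ).ennreal_toReal.log)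
  have hS1 : llr (μ' ⊗ₘ κ') (μ ⊗ₘ κ) =ᵐ[μ' ⊗ₘ κ'] G := aux_llr_compProd hμ hκ
  have hfib : ∀ᵐ x ∂μ', (fun y => G (x, y)) =ᵐ[κ' x]
      fun y => llr μ' μ x + llr (κ' x) (κ x) y := by
    filter_upwards [aux_fiber_llr hκ] with x hx
    filter_upwards [hx] with y hy
    simp only [hG_def, hy]
  have hfibInt : ∀ᵐ x ∂μ', (Integrable (fun y => G (x, y)) (κ' x) ↔
      Integrable (llr (κ' x) (κ x)) (κ' x)) := by
    filter_upwards [hfib] with x hx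
    rw [integrable_congr hx]
    have : (fun y => llr μ' μ x + llr (κ' x) (κ x) y) = fun y => llr (κ' x) (κ x) y + llr μ' μ x := by
      funext y; ring
    rw [this, integrable_add_const_iff]
  have hiff := Measure.integrable_compProd_iff (μ := μ') (κ := κ')
    hGmeas.aestronglyMeasurable
  -- the `norm` integral bound
  have havnorm : ∀ᵐ x ∂μ', Integrable (llr (κ' x) (κ x)) (κ' x) →
      ∫ y, ‖G (x, y)‖ ∂(κ' x) ≤ |llr μ' μ x| + (∫ y, llr (κ' x) (κ x) y ∂(κ' x) + 2) := by
    filter_upwards [hfib, hκ] with x hx hax hInt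
    have h1 : ∫ y, ‖G (x, y)‖ ∂(κ' x) = ∫ y, |llr μ' μ x + llr (κ' x) (κ x) y| ∂(κ' x) := by
      refine integral_congr_ae ?_
      filter_upwards [hx] with y hy
      rw [hy, Real.norm_eq_abs]
    rw [h1]
    have h2 : ∫ y, |llr μ' μ x + llr (κ' x) (κ x) y| ∂(κ' x)
        ≤ ∫ y, (|llr μ' μ x| + |llr (κ' x) (κ x) y|) ∂(κ' x) := by
      refine integral_mono_ae (((integrable_const _).add hInt).abs)
        ((integrable_const _).add hInt.abs) (ae_of_all _ fun y => abs_add_le _ _)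
    refine h2.trans ?_
    rw [integral_add (integrable_const _) hInt.abs, integral_const, probReal_univ,
      one_smul]
    have := aux_integral_abs_llr_le (κ' x) (κ x) hax hInt
    linarith [this]
  have hforward : Integrable G (μ' ⊗ₘ κ') →
      Integrable (llr μ' μ) μ' ∧ (∀ᵐ x ∂μ', Integrable (llr (κ' x) (κ x)) (κ' x)) ∧
        Integrable (fun x => ∫ y, llr (κ' x) (κ x) y ∂(κ' x)) μ' := by
    intro hGint
    obtain ⟨hB', hN⟩ := hiff.mp hGint
    have hB : ∀ᵐ x ∂μ', Integrable (llr (κ' x) (κ x)) (κ' x) := by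
      filter_upwards [hB', hfibInt] with x h1 h2 using h2.mp h1
    have hgm : AEStronglyMeasurable (fun x => ∫ y, G (x, y) ∂(κ' x)) μ' :=
      (hGmeas.stronglyMeasurable.integral_kernel_prod_right' (κ := κ')).aestronglyMeasurable
    have hg : Integrable (fun x => ∫ y, G (x, y) ∂(κ' x)) μ' :=
      Integrable.mono' hN hgm (ae_of_all _ fun x => norm_integral_le_integral_norm _)
    have hg_eq : (fun x => ∫ y, G (x, y) ∂(κ' x)) =ᵐ[μ'] fun x => llr μ' μ x + ∫ y, llr (κ' x) (κ x) y ∂(κ' x) := by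
      filter_upwards [hfib, hB] with x h1 h2
      rw [integral_congr_ae h1, integral_add (integrable_const _) h2, integral_const,
        probReal_univ, one_smul]
    have hc_nonneg : ∀ᵐ x ∂μ', 0 ≤ ∫ y, llr (κ' x) (κ x) y ∂(κ' x) := by
      filter_upwards [hκ, hB] with x h1 h2 using aux_integral_llr_nonneg _ _ h1 h2
    have hA : Integrable (llr μ' μ) μ' := by
      refine Integrable.mono'
        (hg.abs.add (aux_integrable_negPart_llr μ' μ hμ))
        (measurable_llr μ' μ).aestronglyMeasurable ?_
      filter_upwards [hg_eq, hc_nonneg] with x h1 h2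
      simp only [Pi.add_apply]
      rw [Real.norm_eq_abs]
      rcases le_or_gt 0 (llr μ' μ x) with h3 | h3
      · have hle : llr μ' μ x ≤ ∫ y, G (x, y) ∂(κ' x) := by rw [h1]; linarith
        have h4 : |llr μ' μ x| ≤ |∫ y, G (x, y) ∂(κ' x)| := by
          rw [abs_of_nonneg h3]
          exact hle.trans (le_abs_self _)
        have h5 : (0:ℝ) ≤ max (-(llr μ' μ x)) 0 := le_max_right _ _
        linarith
      · have h4 : |llr μ' μ x| = max (-(llr μ' μ x)) 0 := by
          rw [abs_of_neg h3, max_eq_left (by linarith)]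
        have h5 : (0:ℝ) ≤ |∫ y, G (x, y) ∂(κ' x)| := abs_nonneg _
        rw [h4]
        linarith
    have hC : Integrable (fun x => ∫ y, llr (κ' x) (κ x) y ∂(κ' x)) μ' := by
      refine (hg.sub hA).congr ?_
      filter_upwards [hg_eq] with x h1
      simp only [Pi.sub_apply]
      rw [h1]; ring
    exact ⟨hA, hB, hC⟩
  have hbackward : (Integrable (llr μ' μ) μ' ∧ (∀ᵐ x ∂μ', Integrable (llr (κ' x) (κ x)) (κ' x)) ∧
      Integrable (fun x => ∫ y, llr (κ' x) (κ x) y ∂(κ' x)) μ') → Integrable G (μ' ⊗ₘ κ') := by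
    rintro ⟨hA, hB, hC⟩
    rw [hiff]
    constructor
    · filter_upwards [hfibInt, hB] with x h1 h2 using h1.mpr h2
    · have hmeasN : AEStronglyMeasurable (fun x => ∫ y, ‖G (x, y)‖ ∂(κ' x)) μ' :=
        ((hGmeas.norm.stronglyMeasurable).integral_kernel_prod_right'
          (κ := κ')).aestronglyMeasurable
      refine Integrable.mono' (hA.abs.add (hC.add (integrable_const 2))) hmeasN ?_
      filter_upwards [havnorm, hB] with x h1 h2
      simp only [Pi.add_apply]
      rw [Real.norm_eq_abs, abs_of_nonneg (integral_nonneg fun y => norm_nonneg _)]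
      exact h1 h2
  constructor
  · rw [integrable_congr hS1]
    exact ⟨hforward, hbackward⟩
  · intro hInt
    have hGint : Integrable G (μ' ⊗ₘ κ') := (integrable_congr hS1).mp hInt
    obtain ⟨hA, hB, hC⟩ := hforward hGint
    have hg_eq : (fun x => ∫ y, G (x, y) ∂(κ' x)) =ᵐ[μ'] fun x => llr μ' μ x + ∫ y, llr (κ' x) (κ x) y ∂(κ' x) := by
      filter_upwards [hfib, hB] with x h1 h2
      rw [integral_congr_ae h1, integral_add (integrable_const _) h2, integral_const,
        probReal_univ, one_smul]
    calc ∫ p, llr (μ' ⊗ₘ κ') (μ ⊗ₘ κ) p ∂(μ' ⊗ₘ κ')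
        = ∫ p, G p ∂(μ' ⊗ₘ κ') := integral_congr_ae hS1
      _ = ∫ x, ∫ y, G (x, y) ∂(κ' x) ∂μ' := Measure.integral_compProd hGint
      _ = ∫ x, (llr μ' μ x + ∫ y, llr (κ' x) (κ x) y ∂(κ' x)) ∂μ' := integral_congr_ae hg_eq
      _ = ∫ x, llr μ' μ x ∂μ' + ∫ x, ∫ y, llr (κ' x) (κ x) y ∂(κ' x) ∂μ' := integral_add hA hC

end AuxCompProd

/-- **Chain rule for the KL divergence (two-factor case of Lemma F.1)**:
`kl(μ′ ⊗ κ′ ‖ μ ⊗ κ) = kl(μ′‖μ) + ∫_X kl(κ′(x)‖κ(x)) dμ′(x)`, with both sides `+∞`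
precisely when either term on the right is `+∞`. -/
theorem klDiv_compProd_chain_rule
    {X Y : Type*} [MeasurableSpace X] [MeasurableSpace Y]
    [StandardBorelSpace X] [StandardBorelSpace Y]
    (μ μ' : Measure X) [IsProbabilityMeasure μ] [IsProbabilityMeasure μ']
    (κ κ' : Kernel X Y) [IsMarkovKernel κ] [IsMarkovKernel κ'] :
    klDiv (μ' ⊗ₘ κ') (μ ⊗ₘ κ) = klDiv μ' μ + condKLDiv κ' κ μ' ∧
    (klDiv (μ' ⊗ₘ κ') (μ ⊗ₘ κ) = ⊤ ↔
      (klDiv μ' μ = ⊤ ∨ condKLDiv κ' κ μ' = ⊤)) := by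
  by_cases hμ : μ' ≪ μ
  · by_cases hκ : ∀ᵐ x ∂μ', κ' x ≪ κ x
    · have hAC : (μ' ⊗ₘ κ') ≪ (μ ⊗ₘ κ) := Measure.AbsolutelyContinuous.compProd hμ hκ
      obtain ⟨hiff, hval⟩ := aux_main hμ hκ
      by_cases hInt : Integrable (llr (μ' ⊗ₘ κ') (μ ⊗ₘ κ)) (μ' ⊗ₘ κ')
      · obtain ⟨hA, hB, hC⟩ := hiff.mp hInt
        have hfibkl : ∀ᵐ x ∂μ', klDiv (κ' x) (κ x)
            = ((∫ y, llr (κ' x) (κ x) y ∂(κ' x) : ℝ) : EReal) := by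
          filter_upwards [hκ, hB] with x h1 h2
          unfold klDiv
          rw [if_pos ⟨h1, h2⟩]
        have hcond1 : ∀ᵐ x ∂μ', klDiv (κ' x) (κ x) ≠ ⊤ := by
          filter_upwards [hfibkl] with x hx
          rw [hx]; exact EReal.coe_ne_top _
        have htoReal : (fun x => (klDiv (κ' x) (κ x)).toReal)
            =ᵐ[μ'] fun x => ∫ y, llr (κ' x) (κ x) y ∂(κ' x) := by
          filter_upwards [hfibkl] with x hx
          rw [hx, EReal.toReal_coe]
        have hcond2 : Integrable (fun x => (klDiv (κ' x) (κ x)).toReal) μ' :=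
          hC.congr htoReal.symm
        have hcond : condKLDiv κ' κ μ'
            = ((∫ x, ∫ y, llr (κ' x) (κ x) y ∂(κ' x) ∂μ' : ℝ) : EReal) := by
          unfold condKLDiv
          rw [if_pos ⟨hcond1, hcond2⟩]
          norm_cast
          exact integral_congr_ae htoReal
        have hklμ : klDiv μ' μ = ((∫ x, llr μ' μ x ∂μ' : ℝ) : EReal) := by
          unfold klDiv; rw [if_pos ⟨hμ, hA⟩]
        have hklQ : klDiv (μ' ⊗ₘ κ') (μ ⊗ₘ κ)
            = ((∫ p, llr (μ' ⊗ₘ κ') (μ ⊗ₘ κ) p ∂(μ' ⊗ₘ κ') : ℝ) : EReal) := by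
          unfold klDiv; rw [if_pos ⟨hAC, hInt⟩]
        constructor
        · rw [hklQ, hval hInt, hklμ, hcond, ← EReal.coe_add]
        · rw [hklQ, hklμ, hcond]
          simp [EReal.coe_ne_top]
      · have hklQ : klDiv (μ' ⊗ₘ κ') (μ ⊗ₘ κ) = ⊤ := by
          unfold klDiv; rw [if_neg (fun h => hInt h.2)]
        have hnot : ¬ (Integrable (llr μ' μ) μ' ∧
            (∀ᵐ x ∂μ', Integrable (llr (κ' x) (κ x)) (κ' x)) ∧
            Integrable (fun x => ∫ y, llr (κ' x) (κ x) y ∂(κ' x)) μ') :=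
          fun h => hInt (hiff.mpr h)
        by_cases hA : Integrable (llr μ' μ) μ'
        · have hklμ : klDiv μ' μ = ((∫ x, llr μ' μ x ∂μ' : ℝ) : EReal) := by
            unfold klDiv; rw [if_pos ⟨hμ, hA⟩]
          have hcond : condKLDiv κ' κ μ' = ⊤ := by
            unfold condKLDiv
            rw [if_neg]
            rintro ⟨h1, h2⟩
            have hB : ∀ᵐ x ∂μ', Integrable (llr (κ' x) (κ x)) (κ' x) := by
              filter_upwards [h1, hκ] with x hx h2'
              by_contra hcon
              exact hx (by unfold klDiv; rw [if_neg (fun hh => hcon hh.2)])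
            have htoReal : (fun x => (klDiv (κ' x) (κ x)).toReal)
                =ᵐ[μ'] fun x => ∫ y, llr (κ' x) (κ x) y ∂(κ' x) := by
              filter_upwards [hκ, hB] with x ha hb
              rw [show klDiv (κ' x) (κ x)
                  = ((∫ y, llr (κ' x) (κ x) y ∂(κ' x) : ℝ) : EReal) by
                unfold klDiv; rw [if_pos ⟨ha, hb⟩], EReal.toReal_coe]
            have hC : Integrable (fun x => ∫ y, llr (κ' x) (κ x) y ∂(κ' x)) μ' :=
              h2.congr htoReal
            exact hnot ⟨hA, hB, hC⟩
          constructor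
          · rw [hklQ, hcond, hklμ, EReal.coe_add_top]
          · rw [hklQ, hcond]; simp
        · have hklμ : klDiv μ' μ = ⊤ := by
            unfold klDiv; rw [if_neg (fun h => hA h.2)]
          constructor
          · rw [hklQ, hklμ, EReal.top_add_of_ne_bot (aux_condKLDiv_ne_bot κ' κ μ')]
          · rw [hklQ, hklμ]; simp
    · have hACn : ¬ (μ' ⊗ₘ κ') ≪ (μ ⊗ₘ κ) := fun h =>
        hκ ((aux_compProd_ac_iff μ μ' κ κ').mp h).2
      have hklQ : klDiv (μ' ⊗ₘ κ') (μ ⊗ₘ κ) = ⊤ := by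
        unfold klDiv; rw [if_neg (fun h => hACn h.1)]
      have hcond : condKLDiv κ' κ μ' = ⊤ := by
        unfold condKLDiv
        rw [if_neg]
        rintro ⟨h1, _⟩
        refine hκ ?_
        filter_upwards [h1] with x hx
        by_contra hcon
        exact hx (by unfold klDiv; rw [if_neg (fun hh => hcon hh.1)])
      constructor
      · rw [hklQ, hcond, EReal.add_top_of_ne_bot (aux_klDiv_ne_bot μ' μ)]
      · rw [hklQ, hcond]; simp
  · have hACn : ¬ (μ' ⊗ₘ κ') ≪ (μ ⊗ₘ κ) := fun h =>
      hμ ((aux_compProd_ac_iff μ μ' κ κ').mp h).1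
    have hklQ : klDiv (μ' ⊗ₘ κ') (μ ⊗ₘ κ) = ⊤ := by
      unfold klDiv; rw [if_neg (fun h => hACn h.1)]
    have hklμ : klDiv μ' μ = ⊤ := by
      unfold klDiv; rw [if_neg (fun h => hμ h.1)]
    constructor
    · rw [hklQ, hklμ, EReal.top_add_of_ne_bot (aux_condKLDiv_ne_bot κ' κ μ')]
    · rw [hklQ, hklμ]; simp
end
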